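/- arXiv:2004.06968 — 7 statements merged into one kernel-verified Lean document; each statement's English description precedes it below -/
import Mathlib

section
/- Let μ₁,μ₂ ∈ ℝ with μ₂ < 0, r ∈ ℝ with rμ₂ − μ₁ > 0, θ₁ᵖ = 2(rμ₂ − μ₁)/(r²+1), θ₁⁺ = −μ₁ + √(μ₁²+μ₂²). Then rθ₁ᵖ − μ₂ > 0 (i.e., θ₁ᵖ is a zero of −rθ₁ + μ₂ + √((μ₁²+μ₂²) − (θ₁+μ₁)²) on the correct branch) if and only if (r²−1)μ₂ − 2rμ₁ > 0, which is in turn equivalent to rθ₁⁺ − μ₂ > 0. -/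
/-- Equivalence of the pole conditions: `rθ₁ᵖ − μ₂ > 0 ↔ (r²−1)μ₂ − 2rμ₁ > 0 ↔ rθ₁⁺ − μ₂ > 0`. -/
theorem stmt_4 (μ₁ μ₂ r : ℝ) (hμ₂ : μ₂ < 0) (hr : r * μ₂ - μ₁ > 0) :
    (r * (2 * (r * μ₂ - μ₁) / (r ^ 2 + 1)) - μ₂ > 0 ↔ (r ^ 2 - 1) * μ₂ - 2 * r * μ₁ > 0) ∧
    ((r ^ 2 - 1) * μ₂ - 2 * r * μ₁ > 0 ↔
      r * (-μ₁ + Real.sqrt (μ₁ ^ 2 + μ₂ ^ 2)) - μ₂ > 0) := by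
  have hd : (0:ℝ) < r ^ 2 + 1 := by positivity
  set s := Real.sqrt (μ₁ ^ 2 + μ₂ ^ 2) with hs
  have hs0 : 0 ≤ s := Real.sqrt_nonneg _
  have hs2 : s ^ 2 = μ₁ ^ 2 + μ₂ ^ 2 := Real.sq_sqrt (by positivity)
  have habs : |μ₁| < s := by
    have : Real.sqrt (μ₁ ^ 2) < Real.sqrt (μ₁ ^ 2 + μ₂ ^ 2) := by
      apply Real.sqrt_lt_sqrt (by positivity)
      nlinarith
    simpa [Real.sqrt_sq_eq_abs] using this
  have hsgt : μ₁ < s := lt_of_le_of_lt (le_abs_self _) habs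
  -- key lemma: r*s + r*μ₁ + μ₂ < 0
  have hL : r * s + r * μ₁ + μ₂ < 0 := by
    have h1 : μ₁ - r * μ₂ < s := by nlinarith
    -- multiply by -μ₂ > 0 : r*μ₂^2 < -μ₂*(s - μ₁)
    have h2 : r * μ₂ ^ 2 < -μ₂ * (s - μ₁) := by nlinarith
    -- r*(s+μ₁)*(s-μ₁) = r*μ₂^2
    have h3 : r * (s + μ₁) * (s - μ₁) = r * μ₂ ^ 2 := by nlinarith [hs2]
    have h4 : 0 < s - μ₁ := by linarith
    nlinarith [mul_pos h4 h4]
  constructor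
  · have key : r * (2 * (r * μ₂ - μ₁) / (r ^ 2 + 1)) - μ₂
      = ((r ^ 2 - 1) * μ₂ - 2 * r * μ₁) / (r ^ 2 + 1) := by
      field_simp
      ring
    rw [gt_iff_lt, key, div_pos_iff]
    constructor
    · rintro (⟨h, _⟩ | ⟨_, h⟩) <;> linarith
    · intro h; exact Or.inl ⟨h, hd⟩
  · constructor
    · intro hC
      have hmu : μ₂ * ((r ^ 2 - 1) * μ₂ - 2 * r * μ₁) < 0 :=
        mul_neg_of_neg_of_pos hμ₂ hC
      nlinarith [hs2, hL, hmu]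
    · intro h
      have h' : r * s - r * μ₁ - μ₂ > 0 := by nlinarith
      nlinarith [mul_pos h' (by linarith : (0:ℝ) < -(r * s + r * μ₁ + μ₂)), hs2, hμ₂]
end

section
/- Let μ₁,μ₂ ∈ ℝ with μ₂ < 0, r ∈ ℝ with rμ₂ − μ₁ > 0 and (r²−1)μ₂ − 2rμ₁ > 0. Define h(θ₁) = −rθ₁ + μ₂ + √((μ₁²+μ₂²) − (θ₁+μ₁)²) and θ₁ᵖ = 2(rμ₂ − μ₁)/(r²+1). Then h(θ₁ᵖ) = 0 and h'(θ₁ᵖ) = (1+r²)(μ₁ − rμ₂)/((r²−1)μ₂ − 2rμ₁). -/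
/-!
Squaring `h(θ₁) = 0` gives `(rθ₁ − μ₂)² = μ₁² + μ₂² − (θ₁ + μ₁)²`, a quadratic with the root
`θ₁ = 0`, so by Vieta its other root is `θ₁ᵖ`. There the square root equals
`s = rθ₁ᵖ − μ₂ = ((r²−1)μ₂ − 2rμ₁)/(r²+1)`, which is positive, so `θ₁ᵖ` is a genuine zero of `h`
and `h'(θ₁ᵖ) = −r − (θ₁ᵖ + μ₁)/s`.
-/

theorem hasDerivAt_sqrt_sub_sq {R a x : ℝ} (hx : R - (x + a) ^ 2 ≠ 0) :
    HasDerivAt (fun θ : ℝ => Real.sqrt (R - (θ + a) ^ 2))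
      (-(x + a) / Real.sqrt (R - (x + a) ^ 2)) x := by
  have hinner : HasDerivAt (fun θ : ℝ => R - (θ + a) ^ 2) (-(2 * (x + a))) x := by
    simpa using (((hasDerivAt_id x).add_const a).pow 2).const_sub R
  convert hinner.sqrt hx using 1
  field_simp

theorem sq_sub_sq_add_pole_eq (μ₁ μ₂ r : ℝ) :
    (μ₁ ^ 2 + μ₂ ^ 2) - (2 * (r * μ₂ - μ₁) / (r ^ 2 + 1) + μ₁) ^ 2
      = (((r ^ 2 - 1) * μ₂ - 2 * r * μ₁) / (r ^ 2 + 1)) ^ 2 := by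
  field_simp
  ring

theorem sqrt_sq_sub_sq_add_pole {μ₁ μ₂ r : ℝ} (hpole : 0 ≤ (r ^ 2 - 1) * μ₂ - 2 * r * μ₁) :
    Real.sqrt ((μ₁ ^ 2 + μ₂ ^ 2) - (2 * (r * μ₂ - μ₁) / (r ^ 2 + 1) + μ₁) ^ 2)
      = ((r ^ 2 - 1) * μ₂ - 2 * r * μ₁) / (r ^ 2 + 1) := by
  rw [sq_sub_sq_add_pole_eq, Real.sqrt_sq (by positivity)]

theorem stmt_6_general (μ₁ μ₂ r : ℝ)
    (hpole : (r ^ 2 - 1) * μ₂ - 2 * r * μ₁ > 0) :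
    (fun θ₁ : ℝ => -r * θ₁ + μ₂ + Real.sqrt ((μ₁ ^ 2 + μ₂ ^ 2) - (θ₁ + μ₁) ^ 2))
      (2 * (r * μ₂ - μ₁) / (r ^ 2 + 1)) = 0 ∧
    HasDerivAt (fun θ₁ : ℝ => -r * θ₁ + μ₂ + Real.sqrt ((μ₁ ^ 2 + μ₂ ^ 2) - (θ₁ + μ₁) ^ 2))
      ((1 + r ^ 2) * (μ₁ - r * μ₂) / ((r ^ 2 - 1) * μ₂ - 2 * r * μ₁))
      (2 * (r * μ₂ - μ₁) / (r ^ 2 + 1)) := by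
  have hsqrt := sqrt_sq_sub_sq_add_pole hpole.le
  have hinner_ne : (μ₁ ^ 2 + μ₂ ^ 2) - (2 * (r * μ₂ - μ₁) / (r ^ 2 + 1) + μ₁) ^ 2 ≠ 0 := by
    rw [sq_sub_sq_add_pole_eq]
    positivity
  refine ⟨?_, ?_⟩
  · beta_reduce
    rw [hsqrt]
    field_simp
    ring
  · refine ((((hasDerivAt_id' _).const_mul (-r)).add_const μ₂).add
      (hasDerivAt_sqrt_sub_sq hinner_ne)).congr_deriv ?_
    rw [hsqrt]
    generalize hD : (r ^ 2 - 1) * μ₂ - 2 * r * μ₁ = D at hpole ⊢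
    field_simp
    rw [← hD]
    ring

/-- `h(θ₁ᵖ) = 0` and `h'(θ₁ᵖ) = (1+r²)(μ₁ − rμ₂)/((r²−1)μ₂ − 2rμ₁)`. -/
theorem stmt_6 (μ₁ μ₂ r : ℝ) (hμ₂ : μ₂ < 0) (hr : r * μ₂ - μ₁ > 0)
    (hpole : (r ^ 2 - 1) * μ₂ - 2 * r * μ₁ > 0) :
    (fun θ₁ : ℝ => -r * θ₁ + μ₂ + Real.sqrt ((μ₁ ^ 2 + μ₂ ^ 2) - (θ₁ + μ₁) ^ 2))
      (2 * (r * μ₂ - μ₁) / (r ^ 2 + 1)) = 0 ∧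
    HasDerivAt (fun θ₁ : ℝ => -r * θ₁ + μ₂ + Real.sqrt ((μ₁ ^ 2 + μ₂ ^ 2) - (θ₁ + μ₁) ^ 2))
      ((1 + r ^ 2) * (μ₁ - r * μ₂) / ((r ^ 2 - 1) * μ₂ - 2 * r * μ₁))
      (2 * (r * μ₂ - μ₁) / (r ^ 2 + 1)) :=
  stmt_6_general μ₁ μ₂ r hpole
end

section
/- Let Z(t) = B(t) + μt + Rℓ(t) be obliquely reflected Brownian motion in the upper half-plane with identity covariance, drift μ = (μ₁,μ₂), reflection vector R = (r,1), where ℓ(t) = −inf_{0≤s≤t}(B₂(s)+μ₂s). Then for all t ≥ 0, Z₁(t) ≤ (μ₁ + rμ₂⁻)t + B₁(t) + |r| sup_{0≤s≤t}|B₂(s)|, where μ₂⁻ = max(−μ₂,0). Consequently, if μ₁ + rμ₂⁻ < 0 then Z₁(t) → −∞ almost surely as t → ∞. -/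
open MeasureTheory ProbabilityTheory Filter

/-- A standard one-dimensional Brownian motion. -/
def IsBrownian {Ω : Type*} [MeasurableSpace Ω] (B : ℝ → Ω → ℝ) (P : Measure Ω) : Prop :=
  (∀ ω, B 0 ω = 0) ∧
  (∀ ω, Continuous fun t => B t ω) ∧
  (∀ t, Measurable (B t)) ∧
  (∀ s t : ℝ, 0 ≤ s → s ≤ t →
    P.map (fun ω => B t ω - B s ω) = gaussianReal 0 (Real.toNNReal (t - s))) ∧
  (∀ (n : ℕ) (u : ℕ → ℝ), Monotone u → (∀ i, 0 ≤ u i) →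
    iIndepFun
      (fun i : Fin n => fun ω => B (u (i + 1)) ω - B (u i) ω) P)

/-
On `[0, t]` the drift term `μ₂ s` stays between `-μ₂⁻ t` and `0`, and the infimum defining `ℓ(t)`
is at most its value at `s = 0` or at `s = t`; hence `ℓ(t)` differs from `μ₂⁻ t` by at most
`sup_{s ≤ t} |B₂(s)|`, which gives the pathwise bound.

Transience then follows once `sup_{s ≤ t} |B(s)| = o(t)` almost surely for a Brownian motion `B`.
By Lévy's chaining, the path on `[0, n + 1]` is controlled by its values at the integers and its
increments over the dyadic intervals of length `2^{-(i+1)}`. With thresholds `δn/2` and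
`δn (3/4)^i / 8`, which add up to `δn`, the Gaussian tails bound the probability that some
threshold is exceeded by `O(n e^{-δ²n/64})`: since `(3/4)² · 2 = 9/8 > 1`, the tails at level `i`
decay doubly exponentially and beat the `2^i` increments. Borel–Cantelli concludes.
-/

open Set Real Topology
open scoped NNReal ENNReal

lemma abs_le_of_dyadic_increments {g : ℝ → ℝ} (hg : Continuous g) {N : ℕ} {a : ℝ}
    {ε : ℕ → ℝ} (hε : ∀ i, 0 ≤ ε i) (hεs : Summable ε) (hanchor : ∀ j ≤ N, |g j| ≤ a)
    (hinc : ∀ i j : ℕ, j < N * 2 ^ (i + 1) →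
      |g ((j + 1) / 2 ^ (i + 1)) - g (j / 2 ^ (i + 1))| ≤ ε i) :
    ∀ t ∈ Icc (0 : ℝ) N, |g t| ≤ a + ∑' i, ε i := by
  have hdyadic : ∀ k j : ℕ, j ≤ N * 2 ^ k → |g (j / 2 ^ k)| ≤ a + ∑ i ∈ Finset.range k, ε i := by
    intro k
    induction k with
    | zero => simpa using hanchor
    | succ k ih =>
      intro j hj
      have hhalf (m : ℕ) : ((2 * m : ℕ) : ℝ) / 2 ^ (k + 1) = m / 2 ^ k := by
        push_cast; rw [pow_succ]; field_simp
      rw [Finset.sum_range_succ, ← add_assoc]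
      obtain ⟨m, rfl | rfl⟩ := Nat.even_or_odd' j
      · rw [hhalf]
        linarith [ih m (by rw [pow_succ] at hj; linarith), hε k]
      · have hm : 2 * m < N * 2 ^ (k + 1) := by omega
        have hstep := hinc k (2 * m) hm
        rw [hhalf] at hstep
        push_cast at hstep ⊢
        linarith [abs_sub_abs_le_abs_sub (g ((2 * m + 1) / 2 ^ (k + 1))) (g (m / 2 ^ k)),
          ih m (by rw [pow_succ, ← mul_assoc] at hm; omega)]
  intro t ⟨ht0, htN⟩
  have happrox : Tendsto (fun k : ℕ => (⌊t * 2 ^ k⌋₊ : ℝ) / 2 ^ k) atTop (𝓝 t) :=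
    (tendsto_nat_floor_mul_div_atTop ht0).comp
      (tendsto_pow_atTop_atTop_of_one_lt one_lt_two)
  refine le_of_tendsto' ((hg.tendsto t).comp happrox).abs fun k => ?_
  have hj : ⌊t * 2 ^ k⌋₊ ≤ N * 2 ^ k := by
    apply Nat.floor_le_of_le
    push_cast
    gcongr
  exact (hdyadic k _ hj).trans (by gcongr; exact hεs.sum_le_tsum _ fun i _ => hε i)

lemma tsum_ofReal_two_pow_mul_exp_le {x : ℝ} (hx : 24 ≤ x) :
    ∑' i : ℕ, ENNReal.ofReal (2 ^ i * exp (-(x * (9 / 8) ^ i)))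
      ≤ ENNReal.ofReal (2 * exp (-x)) := by
  have hterm (i : ℕ) : ENNReal.ofReal (2 ^ i * exp (-(x * (9 / 8) ^ i)))
      ≤ ENNReal.ofReal (exp (-x)) * 2⁻¹ ^ i := by
    have hbern : 1 + i * (1 / 8 : ℝ) ≤ (9 / 8) ^ i := by
      have h := one_add_mul_le_pow (a := (1 / 8 : ℝ)) (by norm_num) i
      rwa [show (1 : ℝ) + 1 / 8 = 9 / 8 by norm_num] at h
    have hexp3 : (4 : ℝ) ≤ exp 3 := by linarith [add_one_le_exp (3 : ℝ)]
    have hdecay : exp (-(x * (9 / 8) ^ i)) ≤ exp (-x) * (exp 3)⁻¹ ^ i := by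
      rw [← exp_neg, ← exp_nat_mul, ← exp_add]
      gcongr
      nlinarith
    have hreal : ENNReal.ofReal (exp (-x)) * 2⁻¹ ^ i = ENNReal.ofReal (exp (-x) * 2⁻¹ ^ i) := by
      rw [ENNReal.ofReal_mul (exp_nonneg _), ENNReal.ofReal_pow (by norm_num),
        ENNReal.ofReal_inv_of_pos two_pos, ENNReal.ofReal_ofNat]
    rw [hreal]
    apply ENNReal.ofReal_le_ofReal
    calc (2 : ℝ) ^ i * exp (-(x * (9 / 8) ^ i)) ≤ 2 ^ i * (exp (-x) * (4⁻¹) ^ i) := by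
          gcongr
          exact hdecay.trans (by gcongr)
      _ = exp (-x) * (2 * 4⁻¹) ^ i := by rw [mul_pow]; ring
      _ = exp (-x) * 2⁻¹ ^ i := by norm_num
  calc ∑' i : ℕ, ENNReal.ofReal (2 ^ i * exp (-(x * (9 / 8) ^ i)))
      ≤ ∑' i : ℕ, ENNReal.ofReal (exp (-x)) * 2⁻¹ ^ i := ENNReal.tsum_le_tsum hterm
    _ = ENNReal.ofReal (2 * exp (-x)) := by
      rw [ENNReal.tsum_mul_left, ENNReal.tsum_geometric, ENNReal.one_sub_inv_two, inv_inv,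
        ENNReal.ofReal_mul zero_le_two, mul_comm]
      simp

def chainingFailure {Ω : Type*} (B : ℝ → Ω → ℝ) (δ : ℝ) (n : ℕ) (ω : Ω) : Prop :=
  (∃ j ∈ Finset.range (n + 2), δ * n / 2 ≤ |B j ω - B 0 ω|) ∨
  ∃ i : ℕ, ∃ j ∈ Finset.range ((n + 1) * 2 ^ (i + 1)),
    δ * n / 8 * (3 / 4) ^ i ≤ |B ((j + 1) / 2 ^ (i + 1)) ω - B (j / 2 ^ (i + 1)) ω|

lemma abs_le_of_not_chainingFailure {Ω : Type*} {B : ℝ → Ω → ℝ} {δ : ℝ} {n : ℕ} {ω : Ω}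
    (hc : Continuous fun t => B t ω) (h0 : B 0 ω = 0) (hδ : 0 ≤ δ) (h : ¬ chainingFailure B δ n ω) :
    ∀ s ∈ Icc (0 : ℝ) (n + 1), |B s ω| ≤ δ * n := by
  simp only [chainingFailure, not_or, not_exists, not_and, not_le, Finset.mem_range, h0,
    sub_zero] at h
  obtain ⟨hanchor, hinc⟩ := h
  have hgeom : HasSum (fun i : ℕ => δ * n / 8 * (3 / 4) ^ i) (δ * n / 2) := by
    have h := (hasSum_geometric_of_lt_one (r := (3 / 4 : ℝ)) (by norm_num) (by norm_num)).mul_left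
      (δ * n / 8)
    rwa [show δ * n / 8 * (1 - 3 / 4 : ℝ)⁻¹ = δ * n / 2 by ring] at h
  have hchain := abs_le_of_dyadic_increments hc (N := n + 1) (a := δ * n / 2)
    (fun i => by positivity) hgeom.summable (fun j hj => (hanchor j (by omega)).le)
    (fun i j hj => (hinc i j hj).le)
  intro s hs
  convert hchain s (by exact_mod_cast hs) using 1
  rw [hgeom.tsum_eq]
  ring

namespace ProbabilityTheory

variable {Ω : Type*} [MeasurableSpace Ω] {μ : Measure Ω} {X : Ω → ℝ} {c : ℝ≥0}

lemma hasSubgaussianMGF_of_map_eq_gaussianReal (hX : AEMeasurable X μ)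
    (h : μ.map X = gaussianReal 0 c) : HasSubgaussianMGF X c μ := by
  rw [← HasSubgaussianMGF.id_map_iff hX, h]
  exact ⟨integrable_exp_mul_gaussianReal, fun t => by simp [mgf_id_gaussianReal]⟩

lemma HasSubgaussianMGF.mono (h : HasSubgaussianMGF X c μ) {d : ℝ≥0} (hcd : c ≤ d) :
    HasSubgaussianMGF X d μ :=
  ⟨h.integrable_exp_mul, fun t => (h.mgf_le t).trans (exp_le_exp.2 (by gcongr))⟩

lemma HasSubgaussianMGF.measure_abs_ge_le [IsFiniteMeasure μ] (h : HasSubgaussianMGF X c μ)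
    {ε : ℝ} (hε : 0 ≤ ε) :
    μ {ω | ε ≤ |X ω|} ≤ ENNReal.ofReal (2 * exp (-ε ^ 2 / (2 * c))) := by
  have hsplit : {ω | ε ≤ |X ω|} = {ω | ε ≤ X ω} ∪ {ω | ε ≤ (-X) ω} := by
    ext ω
    simp [le_abs', le_neg, or_comm]
  rw [hsplit, two_mul, ENNReal.ofReal_add (exp_nonneg _) (exp_nonneg _)]
  refine (measure_union_le _ _).trans (add_le_add ?_ ?_) <;>
    rw [← ofReal_measureReal] <;> gcongr
  exacts [h.measure_ge_le hε, h.neg.measure_ge_le hε]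

end ProbabilityTheory

lemma ae_eventually_not_of_summable {Ω : Type*} [MeasurableSpace Ω] {μ : Measure Ω}
    [IsFiniteMeasure μ] {p : ℕ → Ω → Prop} {b : ℕ → ℝ} (hb0 : ∀ n, 0 ≤ b n) (hb : Summable b)
    (h : ∀ᶠ n in atTop, μ {ω | p n ω} ≤ ENNReal.ofReal (b n)) :
    ∀ᵐ ω ∂μ, ∀ᶠ n in atTop, ¬ p n ω := by
  have hsummable : Summable fun n => μ.real {ω | p n ω} := by
    refine hb.of_norm_bounded_eventually_nat ?_
    filter_upwards [h] with n hn
    rw [Real.norm_of_nonneg measureReal_nonneg]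
    exact ENNReal.toReal_le_of_le_ofReal (hb0 n) hn
  refine ae_eventually_notMem (s := fun n => {ω | p n ω}) ?_
  have hreal (n : ℕ) : μ {ω | p n ω} = ENNReal.ofReal (μ.real {ω | p n ω}) :=
    (ofReal_measureReal).symm
  simp_rw [hreal, ← ENNReal.ofReal_tsum_of_nonneg (fun _ => measureReal_nonneg) hsummable]
  exact ENNReal.ofReal_ne_top

namespace IsBrownian

variable {Ω : Type*} [MeasurableSpace Ω] {P : Measure Ω} {B : ℝ → Ω → ℝ}

lemma hasSubgaussianMGF_sub (hB : IsBrownian B P) {s t : ℝ} (hs : 0 ≤ s) (hst : s ≤ t) :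
    HasSubgaussianMGF (fun ω => B t ω - B s ω) (t - s).toNNReal P :=
  hasSubgaussianMGF_of_map_eq_gaussianReal ((hB.2.2.1 t).sub (hB.2.2.1 s)).aemeasurable
    (hB.2.2.2.1 s t hs hst)

lemma measure_exists_abs_sub_ge_le [IsFiniteMeasure P] (hB : IsBrownian B P) {ι : Type*}
    (S : Finset ι) {u w : ι → ℝ} {v ε : ℝ} (hε : 0 ≤ ε) (hu : ∀ j ∈ S, 0 ≤ u j)
    (huw : ∀ j ∈ S, u j ≤ w j) (hv : ∀ j ∈ S, w j - u j ≤ v) :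
    P {ω | ∃ j ∈ S, ε ≤ |B (w j) ω - B (u j) ω|}
      ≤ S.card * ENNReal.ofReal (2 * exp (-ε ^ 2 / (2 * v))) := by
  have hunion : {ω | ∃ j ∈ S, ε ≤ |B (w j) ω - B (u j) ω|}
      = ⋃ j ∈ S, {ω | ε ≤ |B (w j) ω - B (u j) ω|} := by
    ext ω; simp
  rw [hunion]
  refine (measure_biUnion_finset_le _ _).trans ?_
  rw [← nsmul_eq_mul]
  refine Finset.sum_le_card_nsmul _ _ _ fun j hj => ?_
  have hv0 : 0 ≤ v := (sub_nonneg.2 (huw j hj)).trans (hv j hj)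
  simpa [Real.coe_toNNReal _ hv0] using
    ((hB.hasSubgaussianMGF_sub (hu j hj) (huw j hj)).mono
      (Real.toNNReal_le_toNNReal (hv j hj))).measure_abs_ge_le hε

lemma measure_exists_abs_nat_ge_le [IsFiniteMeasure P] (hB : IsBrownian B P) {δ : ℝ} {n : ℕ}
    (hδ : 0 ≤ δ) (hn : 1 ≤ n) :
    P {ω | ∃ j ∈ Finset.range (n + 2), δ * n / 2 ≤ |B j ω - B 0 ω|}
      ≤ ENNReal.ofReal (2 * (n + 2) * exp (-(δ ^ 2 / 64 * n))) := by
  have hn' : (1 : ℝ) ≤ n := by exact_mod_cast hn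
  refine (hB.measure_exists_abs_sub_ge_le _ (v := n + 1) (by positivity) (fun _ _ => le_rfl)
    (fun _ _ => by positivity) fun j hj => ?_).trans ?_
  · rw [sub_zero]
    exact_mod_cast Nat.lt_succ_iff.1 (Finset.mem_range.1 hj)
  rw [Finset.card_range, ← ENNReal.ofReal_natCast, ← ENNReal.ofReal_mul (by positivity)]
  apply ENNReal.ofReal_le_ofReal
  push_cast
  rw [show 2 * ((n : ℝ) + 2) * exp (-(δ ^ 2 / 64 * n)) = (n + 2) * (2 * exp (-(δ ^ 2 / 64 * n)))
    by ring]
  gcongr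
  rw [neg_div, neg_le_neg_iff, le_div_iff₀ (by positivity)]
  nlinarith [sq_nonneg δ]

lemma measure_exists_abs_dyadic_increment_ge_le [IsFiniteMeasure P] (hB : IsBrownian B P)
    {δ : ℝ} (hδ : 0 ≤ δ) (n i : ℕ) :
    P {ω | ∃ j ∈ Finset.range ((n + 1) * 2 ^ (i + 1)),
        δ * n / 8 * (3 / 4) ^ i ≤ |B ((j + 1) / 2 ^ (i + 1)) ω - B (j / 2 ^ (i + 1)) ω|}
      ≤ ENNReal.ofReal (4 * (n + 1))
        * ENNReal.ofReal (2 ^ i * exp (-((δ * n) ^ 2 / 64 * (9 / 8) ^ i))) := by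
  refine (hB.measure_exists_abs_sub_ge_le _ (v := 1 / 2 ^ (i + 1)) (by positivity)
    (fun _ _ => by positivity) (fun _ _ => by gcongr; linarith)
    fun j _ => by rw [← sub_div, add_sub_cancel_left]).trans (le_of_eq ?_)
  rw [Finset.card_range, ← ENNReal.ofReal_natCast, ← ENNReal.ofReal_mul (by positivity),
    ← ENNReal.ofReal_mul (by positivity)]
  congr 1
  have hexponent : (δ * n / 8 * (3 / 4) ^ i) ^ 2 / (2 * (1 / 2 ^ (i + 1)))
      = (δ * n) ^ 2 / 64 * (9 / 8) ^ i := by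
    rw [show (9 / 8 : ℝ) ^ i = ((3 / 4) ^ i) ^ 2 * 2 ^ i by
      rw [← pow_mul, mul_comm i 2, pow_mul, ← mul_pow]; norm_num]
    field_simp
    ring
  rw [neg_div, hexponent]
  push_cast
  ring

lemma measure_chainingFailure_le [IsFiniteMeasure P] (hB : IsBrownian B P) {δ : ℝ} {n : ℕ}
    (hn : 1 ≤ n) (hδn : 40 ≤ δ * n) :
    P {ω | chainingFailure B δ n ω} ≤ ENNReal.ofReal (10 * (n + 2) * exp (-(δ ^ 2 / 64 * n))) := by
  have hn' : (1 : ℝ) ≤ n := by exact_mod_cast hn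
  have hδ : 0 ≤ δ := by nlinarith
  set x : ℝ := (δ * n) ^ 2 / 64 with hx
  have hlevels : P {ω | ∃ i : ℕ, ∃ j ∈ Finset.range ((n + 1) * 2 ^ (i + 1)),
        δ * n / 8 * (3 / 4) ^ i ≤ |B ((j + 1) / 2 ^ (i + 1)) ω - B (j / 2 ^ (i + 1)) ω|}
      ≤ ENNReal.ofReal (8 * (n + 2) * exp (-(δ ^ 2 / 64 * n))) := by
    rw [ofPred_exists]
    calc _ ≤ _ := measure_iUnion_le _
      _ ≤ _ := ENNReal.tsum_le_tsum (hB.measure_exists_abs_dyadic_increment_ge_le hδ n)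
      _ = ENNReal.ofReal (4 * (n + 1))
            * ∑' i : ℕ, ENNReal.ofReal (2 ^ i * exp (-(x * (9 / 8) ^ i))) :=
          ENNReal.tsum_mul_left
      _ ≤ ENNReal.ofReal (4 * (n + 1)) * ENNReal.ofReal (2 * exp (-x)) := by
          gcongr
          exact tsum_ofReal_two_pow_mul_exp_le (by nlinarith)
      _ ≤ ENNReal.ofReal (8 * (n + 2) * exp (-(δ ^ 2 / 64 * n))) := by
          rw [← ENNReal.ofReal_mul (by positivity)]
          apply ENNReal.ofReal_le_ofReal
          have hexp : exp (-x) ≤ exp (-(δ ^ 2 / 64 * n)) := by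
            gcongr
            nlinarith [sq_nonneg δ]
          nlinarith [exp_pos (-x)]
  simp only [chainingFailure, ofPred_or]
  calc _ ≤ _ := measure_union_le _ _
    _ ≤ _ := add_le_add (hB.measure_exists_abs_nat_ge_le hδ hn) hlevels
    _ = ENNReal.ofReal (10 * (n + 2) * exp (-(δ ^ 2 / 64 * n))) := by
        rw [← ENNReal.ofReal_add (by positivity) (by positivity)]
        ring_nf

lemma ae_eventually_abs_le_of_nat [IsFiniteMeasure P] (hB : IsBrownian B P) {δ : ℝ} (hδ : 0 < δ) :
    ∀ᵐ ω ∂P, ∀ᶠ n : ℕ in atTop, ∀ s ∈ Icc (0 : ℝ) (n + 1), |B s ω| ≤ δ * n := by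
  have hsummable : Summable fun n : ℕ => 10 * (n + 2) * exp (-(δ ^ 2 / 64 * n)) := by
    have hκ : 0 < δ ^ 2 / 64 := by positivity
    refine (((summable_pow_mul_exp_neg_nat_mul 1 hκ).add
      ((summable_pow_mul_exp_neg_nat_mul 0 hκ).mul_left 2)).mul_left 10).congr fun n => ?_
    simp only [pow_one, pow_zero, neg_mul]
    ring
  have hfail : ∀ᵐ ω ∂P, ∀ᶠ n in atTop, ¬ chainingFailure B δ n ω := by
    refine ae_eventually_not_of_summable (fun n => by positivity) hsummable ?_
    filter_upwards [eventually_ge_atTop 1,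
      (tendsto_natCast_atTop_atTop.const_mul_atTop hδ).eventually_ge_atTop 40] with n hn hδn
      using hB.measure_chainingFailure_le hn hδn
  filter_upwards [hfail] with ω hω
  filter_upwards [hω] with n hn using abs_le_of_not_chainingFailure (hB.2.1 ω) (hB.1 ω) hδ.le hn

lemma ae_eventually_abs_le_mul [IsFiniteMeasure P] (hB : IsBrownian B P) {δ : ℝ} (hδ : 0 < δ) :
    ∀ᵐ ω ∂P, ∀ᶠ t in atTop, ∀ s ∈ Icc 0 t, |B s ω| ≤ δ * t := by
  filter_upwards [hB.ae_eventually_abs_le_of_nat hδ] with ω hω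
  filter_upwards [tendsto_nat_floor_atTop.eventually hω, eventually_ge_atTop 0] with t ht ht0 s hs
  exact (ht s ⟨hs.1, hs.2.trans (Nat.lt_floor_add_one t).le⟩).trans
    (by gcongr; exact Nat.floor_le ht0)

end IsBrownian

lemma abs_neg_sInf_image_add_mul_sub_le {f : ℝ → ℝ} {m t : ℝ} (ht : 0 ≤ t)
    (hf : ContinuousOn f (Icc 0 t)) :
    |-sInf ((fun s => f s + m * s) '' Icc 0 t) - max (-m) 0 * t|
      ≤ sSup ((fun s => |f s|) '' Icc 0 t) := by
  set S := sSup ((fun s => |f s|) '' Icc 0 t)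
  have hS (s : ℝ) (hs : s ∈ Icc 0 t) : |f s| ≤ S :=
    le_csSup (isCompact_Icc.image_of_continuousOn hf.abs).bddAbove (mem_image_of_mem _ hs)
  have hbdd : BddBelow ((fun s => f s + m * s) '' Icc 0 t) :=
    (isCompact_Icc.image_of_continuousOn (hf.add (continuousOn_const.mul continuousOn_id))).bddBelow
  have h0 : (0 : ℝ) ∈ Icc 0 t := ⟨le_rfl, ht⟩
  have ht' : t ∈ Icc 0 t := ⟨ht, le_rfl⟩
  have hlower : -S - max (-m) 0 * t ≤ sInf ((fun s => f s + m * s) '' Icc 0 t) := by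
    refine le_csInf ⟨_, mem_image_of_mem _ h0⟩ ?_
    rintro _ ⟨s, hs, rfl⟩
    have hfs := neg_abs_le (f s) |>.trans' (neg_le_neg (hS s hs))
    nlinarith [le_max_left (-m) 0, le_max_right (-m) 0, hs.1, hs.2]
  have hupper : sInf ((fun s => f s + m * s) '' Icc 0 t) ≤ S - max (-m) 0 * t := by
    rcases le_total 0 m with hm | hm
    · have := csInf_le hbdd (mem_image_of_mem _ h0)
      rw [max_eq_right (by linarith)]
      linarith [le_abs_self (f 0), hS 0 h0]
    · have := csInf_le hbdd (mem_image_of_mem _ ht')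
      rw [max_eq_left (by linarith)]
      linarith [le_abs_self (f t), hS t ht']
  rw [abs_le]
  constructor <;> linarith

theorem stmt_12_general {Ω : Type*} [MeasureSpace Ω] [IsProbabilityMeasure (ℙ : Measure Ω)]
    (B₁ B₂ : ℝ → Ω → ℝ) (hB₁ : IsBrownian B₁ ℙ) (hB₂ : IsBrownian B₂ ℙ)
    (μ₁ μ₂ r : ℝ)
    (ℓ : ℝ → Ω → ℝ)
    (hℓ : ∀ t ω, ℓ t ω = -sInf ((fun s => B₂ s ω + μ₂ * s) '' Set.Icc 0 t))
    (Z₁ : ℝ → Ω → ℝ)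
    (hZ₁ : ∀ t ω, Z₁ t ω = B₁ t ω + μ₁ * t + r * ℓ t ω) :
    (∀ t : ℝ, 0 ≤ t → ∀ ω,
      Z₁ t ω ≤ (μ₁ + r * max (-μ₂) 0) * t + B₁ t ω
        + |r| * sSup ((fun s => |B₂ s ω|) '' Set.Icc 0 t)) ∧
    (μ₁ + r * max (-μ₂) 0 < 0 →
      ∀ᵐ ω ∂(ℙ : Measure Ω), Tendsto (fun t => Z₁ t ω) atTop atBot) := by
  have hbound (t : ℝ) (ht : 0 ≤ t) (ω : Ω) : Z₁ t ω ≤ (μ₁ + r * max (-μ₂) 0) * t + B₁ t ω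
      + |r| * sSup ((fun s => |B₂ s ω|) '' Set.Icc 0 t) := by
    have hreg := abs_neg_sInf_image_add_mul_sub_le (m := μ₂) ht (hB₂.2.1 ω).continuousOn
    have hr : r * (ℓ t ω - max (-μ₂) 0 * t) ≤ |r| * sSup ((fun s => |B₂ s ω|) '' Set.Icc 0 t) :=
      (le_abs_self _).trans (by rw [abs_mul, hℓ]; gcongr)
    rw [hZ₁]
    linarith
  refine ⟨hbound, fun hc => ?_⟩
  set c := μ₁ + r * max (-μ₂) 0
  set δ := -c / (2 * (1 + |r|)) with hδ_def
  have hδ : 0 < δ := div_pos (by linarith) (by positivity)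
  filter_upwards [hB₁.ae_eventually_abs_le_mul hδ, hB₂.ae_eventually_abs_le_mul hδ] with ω h₁ h₂
  refine tendsto_atBot_mono' atTop ?_ (tendsto_id.const_mul_atTop_of_neg (by linarith : c / 2 < 0))
  filter_upwards [h₁, h₂, eventually_ge_atTop 0] with t ht₁ ht₂ ht0
  have hB₁t : B₁ t ω ≤ δ * t := (le_abs_self _).trans (ht₁ t ⟨ht0, le_rfl⟩)
  have hsup : sSup ((fun s => |B₂ s ω|) '' Icc 0 t) ≤ δ * t :=
    csSup_le ⟨_, mem_image_of_mem _ ⟨le_rfl, ht0⟩⟩ (by rintro _ ⟨s, hs, rfl⟩; exact ht₂ s hs)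
  calc Z₁ t ω ≤ c * t + B₁ t ω + |r| * sSup ((fun s => |B₂ s ω|) '' Icc 0 t) := hbound t ht0 ω
    _ ≤ c * t + (1 + |r|) * (δ * t) := by nlinarith [abs_nonneg r]
    _ = c / 2 * id t := by
        rw [hδ_def, id]
        field_simp
        ring

/-- Pathwise bound on the first coordinate of the obliquely reflected Brownian
motion `Z₁(t) = B₁(t) + μ₁ t + r ℓ(t)`, and transience `Z₁(t) → −∞` a.s. when
`μ₁ + r μ₂⁻ < 0`. -/
theorem stmt_12 {Ω : Type*} [MeasureSpace Ω] [IsProbabilityMeasure (ℙ : Measure Ω)]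
    (B₁ B₂ : ℝ → Ω → ℝ) (hB₁ : IsBrownian B₁ ℙ) (hB₂ : IsBrownian B₂ ℙ)
    (hind : IndepFun (fun ω => fun t => B₁ t ω) (fun ω => fun t => B₂ t ω) ℙ)
    (μ₁ μ₂ r : ℝ)
    (ℓ : ℝ → Ω → ℝ)
    (hℓ : ∀ t ω, ℓ t ω = -sInf ((fun s => B₂ s ω + μ₂ * s) '' Set.Icc 0 t))
    (Z₁ : ℝ → Ω → ℝ)
    (hZ₁ : ∀ t ω, Z₁ t ω = B₁ t ω + μ₁ * t + r * ℓ t ω) :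
    (∀ t : ℝ, 0 ≤ t → ∀ ω,
      Z₁ t ω ≤ (μ₁ + r * max (-μ₂) 0) * t + B₁ t ω
        + |r| * sSup ((fun s => |B₂ s ω|) '' Set.Icc 0 t)) ∧
    (μ₁ + r * max (-μ₂) 0 < 0 →
      ∀ᵐ ω ∂(ℙ : Measure Ω), Tendsto (fun t => Z₁ t ω) atTop atBot) :=
  stmt_12_general B₁ B₂ hB₁ hB₂ μ₁ μ₂ r ℓ hℓ Z₁ hZ₁
end

section
/- Let Z be obliquely reflected Brownian motion in the upper half-plane with identity covariance, drift μ, and reflection R = (r,1), started at 0. Let a = Re θ₁ with 0 < a < 2(rμ₂ − μ₁)/(r²+1), and θ₂ with Re θ₂ ≤ 0. Then |E[e^{θ·Z(t)}]| ≤ 8 exp((a(μ₁ + rμ₂⁻) + a²/2 + a²r²/2)t), and the exponent a(μ₁ + rμ₂⁻) + a²(1+r²)/2 is strictly negative; hence E[e^{θ·Z(t)}] → 0 as t → ∞ and ∫₀^∞ E[e^{θ·Z(s)}] ds < ∞. -/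
open MeasureTheory ProbabilityTheory Filter Real Set
open scoped NNReal ENNReal


/-- partial maximum of `g 0, ..., g k`. -/
def pmax (g : ℕ → ℝ) : ℕ → ℝ
  | 0 => g 0
  | (k+1) => max (pmax g k) (g (k+1))

lemma le_pmax (g : ℕ → ℝ) {j k : ℕ} (h : j ≤ k) : g j ≤ pmax g k := by
  induction k with
  | zero => simp_all [pmax]
  | succ k ih =>
    rcases Nat.le_succ_iff.mp h with h' | h'
    · exact le_max_of_le_left (ih h')
    · exact h' ▸ le_max_right _ _

lemma pmax_exists (g : ℕ → ℝ) (k : ℕ) : ∃ j ≤ k, pmax g k = g j := by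
  induction k with
  | zero => exact ⟨0, le_rfl, rfl⟩
  | succ k ih =>
    obtain ⟨j, hj, hje⟩ := ih
    rcases max_cases (pmax g k) (g (k+1)) with ⟨h1, _⟩ | ⟨h1, _⟩
    · exact ⟨j, hj.trans (Nat.le_succ _), by rw [show pmax g (k+1) = max (pmax g k) (g (k+1)) from rfl, h1, hje]⟩
    · exact ⟨k+1, le_rfl, by rw [show pmax g (k+1) = max (pmax g k) (g (k+1)) from rfl, h1]⟩

lemma pmax_le {g : ℕ → ℝ} {k : ℕ} {a : ℝ} (h : ∀ j ≤ k, g j ≤ a) : pmax g k ≤ a := by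
  obtain ⟨j, hj, hje⟩ := pmax_exists g k
  exact hje ▸ h j hj

lemma pmax_congr {g h : ℕ → ℝ} {k : ℕ} (he : ∀ j ≤ k, g j = h j) : pmax g k = pmax h k := by
  induction k with
  | zero => simp [pmax, he 0 le_rfl]
  | succ k ih =>
    simp only [pmax]
    rw [ih (fun j hj => he j (hj.trans (Nat.le_succ _))), he (k+1) le_rfl]

lemma pmax_nonneg {g : ℕ → ℝ} (hg : ∀ j, 0 ≤ g j) (k : ℕ) : 0 ≤ pmax g k :=
  (hg 0).trans (le_pmax g (Nat.zero_le k))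

lemma monotone_comp_pmax {φ : ℝ → ℝ} (hφ : Monotone φ) (g : ℕ → ℝ) (k : ℕ) :
    φ (pmax g k) = pmax (fun j => φ (g j)) k := by
  induction k with
  | zero => rfl
  | succ k ih => simp only [pmax, hφ.map_max, ih]

lemma measurable_pmax {α : Type*} [MeasurableSpace α] {g : ℕ → α → ℝ}
    (hg : ∀ j, Measurable (g j)) (k : ℕ) :
    Measurable (fun x => pmax (fun j => g j x) k) := by
  induction k with
  | zero => exact hg 0
  | succ k ih => exact Measurable.max ih (hg (k+1))

/-- pathwise Doob inequality -/
lemma doob_pathwise (Y : ℕ → ℝ) (hY : ∀ k, 0 ≤ Y k) (N : ℕ) :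
    (pmax Y N)^2/2 + ∑ k ∈ Finset.range N, pmax Y k * (Y (k+1) - Y k)
      ≤ pmax Y N * Y N := by
  induction N with
  | zero => simp [pmax]; nlinarith [hY 0]
  | succ N ih =>
    rw [Finset.sum_range_succ]
    have hM : 0 ≤ pmax Y N := pmax_nonneg hY N
    have h1 : pmax Y (N+1) = max (pmax Y N) (Y (N+1)) := rfl
    rcases max_cases (pmax Y N) (Y (N+1)) with ⟨he, hle⟩ | ⟨he, hle⟩ <;>
      rw [h1, he] <;> nlinarith [ih]

noncomputable def grid (t : ℝ) (m k : ℕ) : ℝ := t * (min k (2^m) : ℕ) / (2:ℝ)^m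

lemma grid_def (t : ℝ) (m k : ℕ) : grid t m k = t * (min k (2^m) : ℕ) / (2:ℝ)^m := rfl

lemma grid_nonneg {t : ℝ} (ht : 0 ≤ t) (m k : ℕ) : 0 ≤ grid t m k := by
  unfold grid; positivity

lemma grid_le {t : ℝ} (ht : 0 ≤ t) (m k : ℕ) : grid t m k ≤ t := by
  unfold grid
  rw [div_le_iff₀ (by positivity)]
  have h1 : ((min k (2^m) : ℕ) : ℝ) ≤ (2:ℝ)^m := by
    calc ((min k (2^m) : ℕ) : ℝ) ≤ ((2^m : ℕ) : ℝ) := by exact_mod_cast min_le_right _ _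
      _ = (2:ℝ)^m := by push_cast; ring
  nlinarith [pow_pos (by norm_num : (0:ℝ) < 2) m]

lemma grid_refine (t : ℝ) (m k : ℕ) : grid t m k = grid t (m+1) (2*k) := by
  unfold grid
  have : min (2*k) (2^(m+1)) = 2 * min k (2^m) := by
    rw [pow_succ, mul_comm (2^m) 2]; exact Nat.mul_min_mul_left 2 k (2^m)
  rw [this]
  push_cast
  field_simp
  ring

lemma dyadic_sup {f : ℝ → ℝ} (hf : Continuous f) {t : ℝ} (ht : 0 ≤ t) :
    (∀ m, pmax (fun k => f (grid t m k)) (2^m) ≤ sSup (f '' Set.Icc 0 t)) ∧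
    (Monotone fun m => pmax (fun k => f (grid t m k)) (2^m)) ∧
    Tendsto (fun m => pmax (fun k => f (grid t m k)) (2^m)) atTop
      (nhds (sSup (f '' Set.Icc 0 t))) := by
  have hne : (Set.Icc (0:ℝ) t).Nonempty := Set.nonempty_Icc.mpr ht
  have hbdd : BddAbove (f '' Set.Icc 0 t) := (isCompact_Icc.image hf).bddAbove
  set D : ℕ → ℝ := fun m => pmax (fun k => f (grid t m k)) (2^m) with hD
  have hDS : ∀ m, D m ≤ sSup (f '' Set.Icc 0 t) := by
    intro m
    refine pmax_le fun j hj => le_csSup hbdd ⟨grid t m j, ⟨grid_nonneg ht m j, grid_le ht m j⟩, rfl⟩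
  have hmono : Monotone D := by
    refine monotone_nat_of_le_succ fun m => ?_
    refine pmax_le fun j hj => ?_
    rw [grid_refine t m j]
    exact le_pmax (fun k => f (grid t (m+1) k)) (by calc 2*j ≤ 2*2^m := by omega
                                                    _ = 2^(m+1) := by ring)
  refine ⟨hDS, hmono, ?_⟩
  obtain ⟨x, hx, hmax⟩ := IsCompact.exists_isMaxOn isCompact_Icc hne hf.continuousOn
  have hS : sSup (f '' Set.Icc 0 t) = f x := by
    refine le_antisymm (csSup_le (hne.image f) ?_) (le_csSup hbdd ⟨x, hx, rfl⟩)
    rintro _ ⟨y, hy, rfl⟩; exact hmax hy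
  have hbR : BddAbove (Set.range D) := by
    refine ⟨sSup (f '' Set.Icc 0 t), ?_⟩
    rintro _ ⟨m, rfl⟩; exact hDS m
  have htend := tendsto_atTop_ciSup hmono hbR
  have hsup : (⨆ m, D m) = sSup (f '' Set.Icc 0 t) := by
    refine le_antisymm (ciSup_le hDS) ?_
    rcases eq_or_lt_of_le ht with h0 | h0
    · -- t = 0
      have hx0 : x = 0 := by rw [← h0] at hx; simpa using hx
      rw [hS, hx0]
      have : f (grid t 0 0) ≤ D 0 := le_pmax (fun k => f (grid t 0 k)) (Nat.zero_le _)
      have hg0 : grid t 0 0 = 0 := by unfold grid; simp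
      calc f 0 = f (grid t 0 0) := by rw [hg0]
        _ ≤ D 0 := this
        _ ≤ ⨆ m, D m := le_ciSup hbR 0
    · -- t > 0
      set km : ℕ → ℕ := fun m => ⌊x * 2^m / t⌋₊ with hkm
      have hxt : x ≤ t := hx.2
      have hx0 : 0 ≤ x := hx.1
      have hkmle : ∀ m, km m ≤ 2^m := by
        intro m
        refine Nat.floor_le_of_le ?_
        rw [div_le_iff₀ h0]
        push_cast
        nlinarith [pow_pos (by norm_num : (0:ℝ) < 2) m]

      have hgval : ∀ m, grid t m (km m) = t * (km m) / 2^m := by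
        intro m; unfold grid; rw [min_eq_left (hkmle m)]
      have hlow : ∀ m, x - t/2^m ≤ grid t m (km m) := by
        intro m
        rw [hgval m]
        have h2 : (0:ℝ) < 2^m := by positivity
        have := Nat.lt_floor_add_one (x * 2^m / t)
        rw [div_lt_iff₀ h0] at this
        rw [sub_le_iff_le_add, ← add_div, le_div_iff₀ h2]
        nlinarith [this]
      have hhigh : ∀ m, grid t m (km m) ≤ x := by
        intro m
        rw [hgval m]
        have h2 : (0:ℝ) < 2^m := by positivity
        rw [div_le_iff₀ h2]
        have := Nat.floor_le (by positivity : 0 ≤ x * 2^m / t)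
        rw [le_div_iff₀ h0] at this
        linarith [this]
      have htend2 : Tendsto (fun m => grid t m (km m)) atTop (nhds x) := by
        have hgeo : Tendsto (fun m : ℕ => t / 2^m) atTop (nhds 0) := by
          have : Tendsto (fun m : ℕ => ((1:ℝ)/2)^m) atTop (nhds 0) :=
            tendsto_pow_atTop_nhds_zero_of_lt_one (by norm_num) (by norm_num)
          have := this.const_mul t
          simpa [div_pow, div_eq_mul_inv, mul_comm] using this
        have hlowt : Tendsto (fun m : ℕ => x - t/2^m) atTop (nhds x) := by
          simpa using tendsto_const_nhds.sub hgeo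
        exact tendsto_of_tendsto_of_tendsto_of_le_of_le hlowt tendsto_const_nhds hlow hhigh
      have hftend : Tendsto (fun m => f (grid t m (km m))) atTop (nhds (f x)) :=
        (hf.continuousAt.tendsto).comp htend2
      rw [hS]
      refine le_of_tendsto hftend (Eventually.of_forall fun m => ?_)
      calc f (grid t m (km m)) ≤ D m := le_pmax (fun k => f (grid t m k)) (hkmle m)
        _ ≤ ⨆ m, D m := le_ciSup hbR m
  rw [← hsup]
  exact htend


lemma gaussian_pdf_exp_eq {v : ℝ≥0} (hv : v ≠ 0) (γ : ℝ) (x : ℝ) :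
    gaussianPDFReal 0 v x * rexp (γ * x)
      = rexp (γ^2 * v / 2) * gaussianPDFReal (γ * v) v x := by
  have hv0 : (0:ℝ) < v := lt_of_le_of_ne v.coe_nonneg (by exact_mod_cast hv.symm)
  unfold gaussianPDFReal
  have hexp : -(x-0)^2/(2*(v:ℝ)) + γ*x = γ^2*(v:ℝ)/2 + (-(x-γ*(v:ℝ))^2/(2*(v:ℝ))) := by
    field_simp
    ring
  rw [mul_assoc, ← Real.exp_add, hexp, Real.exp_add]
  ring

lemma gaussian_exp (v : ℝ≥0) (γ : ℝ) :
    Integrable (fun x => rexp (γ * x)) (gaussianReal 0 v) ∧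
    ∫ x, rexp (γ * x) ∂(gaussianReal 0 v) = rexp (γ^2 * v / 2) := by
  by_cases hv : v = 0
  · subst hv
    rw [gaussianReal_zero_var]
    constructor
    · refine ⟨(measurable_const.mul measurable_id').exp.aestronglyMeasurable, ?_⟩
      rw [HasFiniteIntegral, lintegral_dirac]
      exact enorm_lt_top
    · rw [integral_dirac]; simp
  · have hpdfmeas : Measurable fun x => (gaussianPDFReal 0 v x).toNNReal :=
      (measurable_gaussianPDFReal 0 v).real_toNNReal
    have hrw : gaussianReal 0 v
        = volume.withDensity (fun x => ((gaussianPDFReal 0 v x).toNNReal : ℝ≥0∞)) := by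
      rw [gaussianReal_of_var_ne_zero 0 hv]; rfl
    have hsmul : (fun x => (gaussianPDFReal 0 v x).toNNReal • rexp (γ * x))
        = fun x => rexp (γ^2 * v / 2) * gaussianPDFReal (γ * v) v x := by
      funext x
      rw [NNReal.smul_def, Real.coe_toNNReal _ (gaussianPDFReal_nonneg 0 v x)]
      exact gaussian_pdf_exp_eq hv γ x
    constructor
    · rw [hrw, integrable_withDensity_iff_integrable_smul hpdfmeas, hsmul]
      exact (integrable_gaussianPDFReal (γ * v) v).const_mul _
    · rw [hrw, integral_withDensity_eq_integral_smul hpdfmeas, hsmul,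
        integral_const_mul, integral_gaussianPDFReal_eq_one (γ * v) hv, mul_one]

lemma neg_sInf_image (g : ℝ → ℝ) (I : Set ℝ) :
    -sInf (g '' I) = sSup ((fun s => -g s) '' I) := by
  rw [Real.sInf_def, neg_neg]
  congr 1
  ext x
  simp only [Set.mem_neg, Set.mem_image]
  constructor
  · rintro ⟨s, hs, hgs⟩
    exact ⟨s, hs, by linarith⟩
  · rintro ⟨s, hs, hgs⟩
    exact ⟨s, hs, by linarith⟩

-- auxiliary lemmas
lemma exp_moment_of_map {Ω : Type*} [MeasurableSpace Ω] {P : Measure Ω} {X : Ω → ℝ}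
    (hX : Measurable X) {w : ℝ≥0} (hmap : P.map X = gaussianReal 0 w) (γ : ℝ) :
    Integrable (fun ω => rexp (γ * X ω)) P ∧
    ∫ ω, rexp (γ * X ω) ∂P = rexp (γ^2 * w / 2) := by
  have hg : Measurable fun x : ℝ => rexp (γ * x) := (measurable_const.mul measurable_id').exp
  constructor
  · have h1 : Integrable (fun x => rexp (γ * x)) (P.map X) := by
      rw [hmap]; exact (gaussian_exp w γ).1
    exact (integrable_map_measure hg.aestronglyMeasurable hX.aemeasurable).mp h1
  · calc ∫ ω, rexp (γ * X ω) ∂P = ∫ x, rexp (γ * x) ∂(P.map X) :=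
          (integral_map hX.aemeasurable hg.aestronglyMeasurable).symm
      _ = rexp (γ^2 * w / 2) := by rw [hmap]; exact (gaussian_exp w γ).2

lemma bm_increment_map {Ω : Type*} [MeasurableSpace Ω] {P : Measure Ω} {B : ℝ → Ω → ℝ}
    (hB : IsBrownian B P) {s t : ℝ} (hs : 0 ≤ s) (hst : s ≤ t) :
    P.map (fun ω => B t ω - B s ω) = gaussianReal 0 (Real.toNNReal (t - s)) :=
  hB.2.2.2.1 s t hs hst

lemma bm_map {Ω : Type*} [MeasurableSpace Ω] {P : Measure Ω} {B : ℝ → Ω → ℝ}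
    (hB : IsBrownian B P) {s : ℝ} (hs : 0 ≤ s) :
    P.map (B s) = gaussianReal 0 (Real.toNNReal s) := by
  have h := hB.2.2.2.1 0 s le_rfl hs
  have he : (fun ω => B s ω - B 0 ω) = B s := funext fun ω => by rw [hB.1 ω, sub_zero]
  rwa [he, sub_zero] at h


/-- Doob L² bound on the dyadic grid. -/
lemma grid_bound {Ω : Type*} [MeasureSpace Ω] [IsProbabilityMeasure (ℙ : Measure Ω)]
    {B : ℝ → Ω → ℝ} (hB : IsBrownian B ℙ) {t c : ℝ} (ht : 0 ≤ t) (hc : 0 < c) (m : ℕ) :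
    Integrable (fun ω => rexp (c * pmax (fun k => -B (grid t m k) ω) (2^m))) ℙ ∧
    ∫ ω, rexp (c * pmax (fun k => -B (grid t m k) ω) (2^m)) ∂ℙ ≤ 4 * rexp (c^2 * t / 2) := by
  classical
  set N : ℕ := 2^m with hNdef
  have hNpos : 0 < N := Nat.two_pow_pos m
  set u : ℕ → ℝ := fun k => grid t m k with hu
  have hu0 : ∀ k, 0 ≤ u k := by
    intro k; rw [hu]; simp only [grid_def]; positivity
  have humono : Monotone u := by
    intro k k' hkk
    simp only [hu, grid_def]
    have hcast : ((min k N : ℕ):ℝ) ≤ ((min k' N : ℕ):ℝ) := by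
      exact_mod_cast min_le_min hkk (le_refl N)
    have h2 : (0:ℝ) < 2^m := by positivity
    gcongr
  have huzero : u 0 = 0 := by simp [hu, grid_def]
  have huN : u N = t := by
    simp only [hu, grid_def, min_self]
    rw [hNdef]; push_cast; rw [min_self]; field_simp
  -- increments
  set ξ : Fin N → Ω → ℝ := fun i ω => B (u ((i:ℕ) + 1)) ω - B (u (i:ℕ)) ω with hξ
  have measξ : ∀ i, Measurable (ξ i) := fun i => (hB.2.2.1 _).sub (hB.2.2.1 _)
  have hiid : iIndepFun ξ ℙ := hB.2.2.2.2 N u humono hu0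
  -- the walk
  set W : ℕ → Ω → ℝ := fun k ω => -B (u k) ω with hW
  have measW : ∀ k, Measurable (W k) := fun k => (hB.2.2.1 _).neg
  have hWsum : ∀ (j : ℕ), j ≤ N → ∀ ω, W j ω = -(∑ i ∈ Finset.range j, (B (u (i+1)) ω - B (u i) ω)) := by
    intro j hj ω
    rw [Finset.sum_range_sub (fun i => B (u i) ω), huzero, hB.1 ω, sub_zero, hW]
  -- exponential moments
  have hWexp : ∀ (γ : ℝ) (k : ℕ), Integrable (fun ω => rexp (γ * W k ω)) ℙ ∧
      ∫ ω, rexp (γ * W k ω) ∂ℙ = rexp (γ^2 * u k / 2) := by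
    intro γ k
    have hmap := bm_map hB (hu0 k)
    have h := exp_moment_of_map (hB.2.2.1 (u k)) hmap (-γ)
    have he : (fun ω => rexp (-γ * B (u k) ω)) = fun ω => rexp (γ * W k ω) := by
      funext ω; rw [hW]; ring_nf
    rw [he] at h
    have hv : ((Real.toNNReal (u k) : ℝ≥0) : ℝ) = u k := Real.coe_toNNReal _ (hu0 k)
    rcases h with ⟨h1, h2⟩
    refine ⟨h1, ?_⟩
    rw [h2, hv]; ring_nf
  set Y : ℕ → Ω → ℝ := fun k ω => rexp ((c/2) * W k ω) with hY
  have measY : ∀ k, Measurable (Y k) := fun k => ((measW k).const_mul _).exp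
  have hYpos : ∀ k ω, 0 < Y k ω := fun k ω => Real.exp_pos _
  set M : ℕ → Ω → ℝ := fun k ω => pmax (fun j => Y j ω) k with hM
  have measM : ∀ k, Measurable (M k) := fun k => measurable_pmax (fun j => measY j) k
  have hMpos : ∀ k ω, 0 ≤ M k ω := fun k ω => pmax_nonneg (fun j => (hYpos j ω).le) k
  have hY2 : ∀ k, (fun ω => (Y k ω)^2) = fun ω => rexp (c * W k ω) := by
    intro k; funext ω
    rw [hY, sq, ← Real.exp_add]; ring_nf
  have intY2 : ∀ k, Integrable (fun ω => (Y k ω)^2) ℙ := by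
    intro k; rw [hY2 k]; exact (hWexp c k).1
  -- domination
  set SY : ℕ → Ω → ℝ := fun k ω => ∑ j ∈ Finset.range (k+1), (Y j ω)^2 with hSY
  have intSY : ∀ k, Integrable (SY k) ℙ := fun k => integrable_finset_sum _ (fun j _ => intY2 j)
  have hM2le : ∀ k ω, (M k ω)^2 ≤ SY k ω := by
    intro k ω
    obtain ⟨j, hj, hje⟩ := pmax_exists (fun j => Y j ω) k
    rw [hM]
    simp only
    rw [hje]
    exact Finset.single_le_sum (f := fun j => (Y j ω)^2) (fun i _ => sq_nonneg _)
      (Finset.mem_range.mpr (Nat.lt_succ_of_le hj))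
  have intM2 : ∀ k, Integrable (fun ω => (M k ω)^2) ℙ := by
    intro k
    refine Integrable.mono' (intSY k) ((measM k).pow_const 2).aestronglyMeasurable ?_
    exact Eventually.of_forall fun ω => by
      rw [Real.norm_eq_abs, abs_of_nonneg (sq_nonneg _)]; exact hM2le k ω
  have hMYle : ∀ k ω, M k ω * Y k ω ≤ SY k ω := by
    intro k ω
    have h1 : (M k ω)^2 ≤ SY k ω := hM2le k ω
    have h2 : (Y k ω)^2 ≤ SY k ω := by
      refine Finset.single_le_sum (f := fun j => (Y j ω)^2) (fun i _ => sq_nonneg _)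
        (Finset.mem_range.mpr (Nat.lt_succ_self k))
    nlinarith [hMpos k ω, (hYpos k ω).le]
  have intMY : ∀ k, Integrable (fun ω => M k ω * Y k ω) ℙ := by
    intro k
    refine Integrable.mono' (intSY k) ((measM k).mul (measY k)).aestronglyMeasurable ?_
    exact Eventually.of_forall fun ω => by
      rw [Real.norm_eq_abs, abs_of_nonneg (mul_nonneg (hMpos k ω) (hYpos k ω).le)]
      exact hMYle k ω
  -- the independence step
  have hstep : ∀ k, k < N → Integrable (fun ω => M k ω * (Y (k+1) ω - Y k ω)) ℙ ∧
      0 ≤ ∫ ω, M k ω * (Y (k+1) ω - Y k ω) ∂ℙ := by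
    intro k hk
    set S : Finset (Fin N) := Finset.filter (fun i : Fin N => (i:ℕ) < k) Finset.univ with hS
    set T : Finset (Fin N) := {(⟨k, hk⟩ : Fin N)} with hT
    have hST : Disjoint S T := by
      rw [Finset.disjoint_right]
      intro i hiT hiS
      rw [hT, Finset.mem_singleton] at hiT
      rw [hS, Finset.mem_filter] at hiS
      rw [hiT] at hiS
      exact lt_irrefl k hiS.2
    have hIF := hiid.indepFun_finset S T hST measξ
    -- prefix function
    set pw : ({i : Fin N // i ∈ S} → ℝ) → ℕ → ℝ := fun v j =>
      -(∑ i ∈ Finset.range (min j k), if h : i < k then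
          v ⟨⟨i, h.trans hk⟩, by rw [hS]; exact Finset.mem_filter.mpr ⟨Finset.mem_univ _, h⟩⟩ else 0)
      with hpw
    have measpw : ∀ j, Measurable (fun v => pw v j) := by
      intro j
      apply Measurable.neg
      apply Finset.measurable_sum
      intro i _
      by_cases h : i < k
      · simp only [dif_pos h]; exact measurable_pi_apply _
      · simp only [dif_neg h]; exact measurable_const
    set g1 : ({i : Fin N // i ∈ S} → ℝ) → ℝ := fun v =>
      pmax (fun j => rexp ((c/2) * pw v j)) k * rexp ((c/2) * pw v k) with hg1
    have measg1 : Measurable g1 := by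
      apply Measurable.mul
      · exact measurable_pmax (fun j => (((measpw j).const_mul _).exp)) k
      · exact ((measpw k).const_mul _).exp
    set g2 : ({i : Fin N // i ∈ T} → ℝ) → ℝ := fun v =>
      rexp (-(c/2) * v ⟨⟨k, hk⟩, Finset.mem_singleton_self _⟩) - 1 with hg2
    have measg2 : Measurable g2 :=
      (((measurable_pi_apply _).const_mul _).exp).sub measurable_const
    have hpwspec : ∀ ω : Ω, ∀ j, j ≤ k → pw (fun i => ξ i.1 ω) j = W j ω := by
      intro ω j hj
      have hmin : min j k = j := min_eq_left hj
      have hsum := hWsum j (hj.trans hk.le) ω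
      rw [hpw]
      simp only [hmin, hsum]
      congr 1
      refine Finset.sum_congr rfl fun i hi => ?_
      have hik : i < k := lt_of_lt_of_le (Finset.mem_range.mp hi) hj
      rw [dif_pos hik]
    have hInd : IndepFun (fun ω => M k ω * Y k ω)
        (fun ω => rexp (-(c/2) * ξ ⟨k, hk⟩ ω) - 1) ℙ := by
      have hci := hIF.comp measg1 measg2
      have e1 : (g1 ∘ fun a (i : {x // x ∈ S}) => ξ (↑i) a) = fun ω => M k ω * Y k ω := by
        funext ω
        simp only [Function.comp_apply, hg1]
        rw [hM, hY]
        congr 1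
        · refine pmax_congr fun j hj => ?_
          rw [hpwspec ω j hj]
        · rw [hpwspec ω k le_rfl]
      have e2 : (g2 ∘ fun a (i : {x // x ∈ T}) => ξ (↑i) a) =
          fun ω => rexp (-(c/2) * ξ ⟨k, hk⟩ ω) - 1 := rfl
      rwa [e1, e2] at hci
    -- integrability of the increment factor
    have hmapinc : Measure.map (ξ ⟨k, hk⟩) ℙ = gaussianReal 0 (Real.toNNReal (u (k+1) - u k)) :=
      bm_increment_map hB (hu0 k) (humono (Nat.le_succ k))
    have hincexp := exp_moment_of_map (measξ ⟨k, hk⟩) hmapinc (-(c/2))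
    have intR : Integrable (fun ω => rexp (-(c/2) * ξ ⟨k, hk⟩ ω) - 1) ℙ :=
      hincexp.1.sub (integrable_const 1)
    have hER : 0 ≤ ∫ ω, (rexp (-(c/2) * ξ ⟨k, hk⟩ ω) - 1) ∂ℙ := by
      rw [integral_sub hincexp.1 (integrable_const 1), integral_const]
      simp only [measure_univ, probReal_univ, ENNReal.toReal_one, one_smul, smul_eq_mul, one_mul]
      rw [hincexp.2]
      have : (0:ℝ) ≤ (-(c/2))^2 * (Real.toNNReal (u (k+1) - u k) : ℝ) / 2 := by positivity
      linarith [Real.one_le_exp this]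
    -- pointwise identity
    have hptw : (fun ω => M k ω * (Y (k+1) ω - Y k ω)) =
        fun ω => (M k ω * Y k ω) * (rexp (-(c/2) * ξ ⟨k, hk⟩ ω) - 1) := by
      funext ω
      have hYstep : Y (k+1) ω = Y k ω * rexp (-(c/2) * ξ ⟨k, hk⟩ ω) := by
        rw [hY]
        simp only
        rw [← Real.exp_add]
        congr 1
        rw [hW]
        simp only [hξ]
        ring_nf
      rw [hYstep]; ring
    have intprod : Integrable (fun ω => (M k ω * Y k ω) * (rexp (-(c/2) * ξ ⟨k, hk⟩ ω) - 1)) ℙ := by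
      have := hInd.integrable_mul (intMY k) intR
      exact this
    constructor
    · rw [hptw]; exact intprod
    · rw [hptw]
      have hmul := hInd.integral_fun_mul_eq_mul_integral (intMY k).1 intR.1
      have hintmul : ∫ ω, (M k ω * Y k ω) * (rexp (-(c/2) * ξ ⟨k, hk⟩ ω) - 1) ∂ℙ =
          (∫ ω, M k ω * Y k ω ∂ℙ) * ∫ ω, (rexp (-(c/2) * ξ ⟨k, hk⟩ ω) - 1) ∂ℙ := hmul
      rw [hintmul]
      exact mul_nonneg (integral_nonneg (fun ω => mul_nonneg (hMpos k ω) (hYpos k ω).le)) hER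
  -- integrate the pathwise inequality
  have intsum : Integrable (fun ω => (M N ω)^2/2 + ∑ k ∈ Finset.range N, M k ω * (Y (k+1) ω - Y k ω)) ℙ := by
    refine Integrable.add ((intM2 N).div_const 2) ?_
    exact integrable_finset_sum _ (fun k hkmem => (hstep k (Finset.mem_range.mp hkmem)).1)
  have hmono1 : ∫ ω, ((M N ω)^2/2 + ∑ k ∈ Finset.range N, M k ω * (Y (k+1) ω - Y k ω)) ∂ℙ
      ≤ ∫ ω, M N ω * Y N ω ∂ℙ := by
    refine integral_mono intsum (intMY N) ?_
    intro ω
    exact doob_pathwise (fun k => Y k ω) (fun k => (hYpos k ω).le) N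
  have hsplit : ∫ ω, ((M N ω)^2/2 + ∑ k ∈ Finset.range N, M k ω * (Y (k+1) ω - Y k ω)) ∂ℙ
      = (∫ ω, (M N ω)^2 ∂ℙ)/2 + ∑ k ∈ Finset.range N, ∫ ω, M k ω * (Y (k+1) ω - Y k ω) ∂ℙ := by
    rw [integral_add ((intM2 N).div_const 2)
      (integrable_finset_sum _ (fun k hkmem => (hstep k (Finset.mem_range.mp hkmem)).1)),
      integral_div, integral_finset_sum _ (fun k hkmem => (hstep k (Finset.mem_range.mp hkmem)).1)]
  have hsumnn : 0 ≤ ∑ k ∈ Finset.range N, ∫ ω, M k ω * (Y (k+1) ω - Y k ω) ∂ℙ :=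
    Finset.sum_nonneg (fun k hkmem => (hstep k (Finset.mem_range.mp hkmem)).2)
  have hEM2 : ∫ ω, (M N ω)^2 ∂ℙ ≤ 2 * ∫ ω, M N ω * Y N ω ∂ℙ := by
    rw [hsplit] at hmono1
    linarith
  have hMY2 : ∫ ω, M N ω * Y N ω ∂ℙ ≤ (∫ ω, (M N ω)^2 ∂ℙ)/4 + ∫ ω, (Y N ω)^2 ∂ℙ := by
    have := integral_mono (intMY N) (((intM2 N).div_const 4).add (intY2 N)) (fun ω => by
      have h := sq_nonneg (M N ω / 2 - Y N ω)
      simp only [Pi.add_apply]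
      nlinarith [hMpos N ω, (hYpos N ω).le])
    calc ∫ ω, M N ω * Y N ω ∂ℙ ≤ ∫ ω, ((M N ω)^2/4 + (Y N ω)^2) ∂ℙ := this
      _ = (∫ ω, (M N ω)^2 ∂ℙ)/4 + ∫ ω, (Y N ω)^2 ∂ℙ := by
          rw [integral_add ((intM2 N).div_const 4) (intY2 N), integral_div]
  have hEY2 : ∫ ω, (Y N ω)^2 ∂ℙ = rexp (c^2 * t / 2) := by
    have h := (hWexp c N).2
    calc ∫ ω, (Y N ω)^2 ∂ℙ = ∫ ω, rexp (c * W N ω) ∂ℙ := by rw [hY2 N]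
      _ = rexp (c^2 * u N / 2) := h
      _ = rexp (c^2 * t / 2) := by rw [huN]
  have hfinal : ∫ ω, (M N ω)^2 ∂ℙ ≤ 4 * rexp (c^2 * t / 2) := by
    rw [← hEY2]
    linarith
  -- identify the target function with (M N)^2
  have hφ : Monotone (fun x : ℝ => rexp ((c/2) * x)) := fun x y hxy =>
    Real.exp_le_exp.mpr (mul_le_mul_of_nonneg_left hxy (by positivity))
  have hid : (fun ω => rexp (c * pmax (fun k => -B (grid t m k) ω) N)) =
      fun ω => (M N ω)^2 := by
    funext ω
    have h2 : M N ω = rexp ((c/2) * pmax (fun k => W k ω) N) := by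
      rw [hM]
      simp only
      rw [monotone_comp_pmax hφ]
    have h3 : (fun k : ℕ => -B (grid t m k) ω) = fun k => W k ω := rfl
    rw [h3, h2, sq, ← Real.exp_add]
    congr 1
    ring
  constructor
  · have hg : Integrable (fun ω => (M N ω)^2) ℙ := intM2 N
    rwa [← hid] at hg
  · calc ∫ ω, rexp (c * pmax (fun k => -B (grid t m k) ω) N) ∂ℙ
        = ∫ ω, (M N ω)^2 ∂ℙ := by rw [hid]
      _ ≤ 4 * rexp (c^2 * t / 2) := hfinal

lemma bm_exp {Ω : Type*} [MeasurableSpace Ω] {P : Measure Ω} {B : ℝ → Ω → ℝ}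
    (hB : IsBrownian B P) {s : ℝ} (hs : 0 ≤ s) (γ : ℝ) :
    Integrable (fun ω => rexp (γ * B s ω)) P ∧
    ∫ ω, rexp (γ * B s ω) ∂P = rexp (γ^2 * s / 2) := by
  obtain ⟨h1, h2⟩ := exp_moment_of_map (hB.2.2.1 s) (bm_map hB hs) γ
  refine ⟨h1, ?_⟩
  rw [h2, Real.coe_toNNReal _ hs]

lemma key_bound {Ω : Type*} [MeasureSpace Ω] [IsProbabilityMeasure (ℙ : Measure Ω)]
    (B₁ B₂ : ℝ → Ω → ℝ) (hB₁ : IsBrownian B₁ ℙ) (hB₂ : IsBrownian B₂ ℙ)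
    (hind : IndepFun (fun ω => fun t => B₁ t ω) (fun ω => fun t => B₂ t ω) ℙ)
    (μ₁ μ₂ r : ℝ) (hμ₂ : μ₂ < 0)
    (ℓ : ℝ → Ω → ℝ)
    (hℓ : ∀ t ω, ℓ t ω = -sInf ((fun s => B₂ s ω + μ₂ * s) '' Set.Icc 0 t))
    {a : ℝ} (ha : 0 < a) {t : ℝ} (ht : 0 ≤ t) :
    Measurable (ℓ t) ∧
    Integrable (fun ω => rexp (a * (B₁ t ω + μ₁ * t + r * ℓ t ω))) ℙ ∧
    ∫ ω, rexp (a * (B₁ t ω + μ₁ * t + r * ℓ t ω)) ∂ℙ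
      ≤ 4 * rexp ((a * (μ₁ + r * (-μ₂)) + a^2/2 + a^2*r^2/2) * t) := by
  set c : ℝ := a * r with hcdef
  set K : ℝ := a * (μ₁ + r * (-μ₂)) + a^2/2 + a^2*r^2/2 with hK
  have hcB2 : ∀ ω, Continuous fun s => B₂ s ω := hB₂.2.1
  have hcg : ∀ ω : Ω, Continuous fun s : ℝ => -(B₂ s ω + μ₂ * s) :=
    fun ω => ((hcB2 ω).add (continuous_const.mul continuous_id)).neg
  have hℓs : ∀ ω, ℓ t ω = sSup ((fun s : ℝ => -(B₂ s ω + μ₂ * s)) '' Set.Icc 0 t) := by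
    intro ω; rw [hℓ t ω, neg_sInf_image]
  have hℓmeas : Measurable (ℓ t) := by
    apply measurable_of_tendsto_metrizable
      (f := fun m ω => pmax (fun k => -(B₂ (grid t m k) ω + μ₂ * grid t m k)) (2^m))
      (fun m => measurable_pmax (fun k => ((hB₂.2.2.1 _).add_const _).neg) (2^m))
    rw [tendsto_pi_nhds]
    intro ω
    rw [show ℓ t ω = sSup ((fun s : ℝ => -(B₂ s ω + μ₂ * s)) '' Set.Icc 0 t) from hℓs ω]
    exact (dyadic_sup (hcg ω) ht).2.2
  have hZmeas : Measurable (fun ω => rexp (a * (B₁ t ω + μ₁ * t + r * ℓ t ω))) :=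
    ((((hB₁.2.2.1 t).add_const _).add (hℓmeas.const_mul r)).const_mul a).exp
  have hZnn : ∀ ω, (0:ℝ) ≤ rexp (a * (B₁ t ω + μ₁ * t + r * ℓ t ω)) := fun ω => (exp_pos _).le
  have hexp1 := bm_exp hB₁ ht a
  have hlb : ∀ ω, -(B₂ t ω + μ₂ * t) ≤ ℓ t ω := by
    intro ω
    rw [hℓ t ω]
    have hbb : BddBelow ((fun s : ℝ => B₂ s ω + μ₂ * s) '' Set.Icc 0 t) :=
      (isCompact_Icc.image ((hcB2 ω).add (continuous_const.mul continuous_id))).bddBelow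
    have h1 : sInf ((fun s : ℝ => B₂ s ω + μ₂ * s) '' Set.Icc 0 t) ≤ B₂ t ω + μ₂ * t :=
      csInf_le hbb ⟨t, ⟨ht, le_rfl⟩, rfl⟩
    linarith
  rcases le_or_gt c 0 with hc | hc
  · -- c ≤ 0 : use the endpoint lower bound for ℓ
    set X : Ω → ℝ := fun ω => rexp (a * B₁ t ω) with hX
    set Yf : Ω → ℝ := fun ω => rexp (-c * B₂ t ω) with hYf
    have hindXY : IndepFun X Yf ℙ := by
      have h := hind.comp (φ := fun p : ℝ → ℝ => rexp (a * p t))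
        (ψ := fun p : ℝ → ℝ => rexp (-c * p t))
        (by fun_prop)
        (by fun_prop)
      exact h
    have hexp2 := bm_exp hB₂ ht (-c)
    have intXY : Integrable (fun ω => X ω * Yf ω) ℙ := hindXY.integrable_mul hexp1.1 hexp2.1
    have hEXY : ∫ ω, X ω * Yf ω ∂ℙ = rexp (a^2*t/2) * rexp ((-c)^2*t/2) := by
      have h2 : ∫ ω, X ω * Yf ω ∂ℙ = (∫ ω, X ω ∂ℙ) * ∫ ω, Yf ω ∂ℙ :=
        hindXY.integral_fun_mul_eq_mul_integral hexp1.1.1 hexp2.1.1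
      rw [h2, hexp1.2, hexp2.2]
    set H : Ω → ℝ := fun ω => rexp ((a*μ₁ - c*μ₂)*t) * (X ω * Yf ω) with hH
    have intH : Integrable H ℙ := intXY.const_mul _
    have hcmp : ∀ ω, rexp (a * (B₁ t ω + μ₁ * t + r * ℓ t ω)) ≤ H ω := by
      intro ω
      have h1 : c * ℓ t ω ≤ c * (-(B₂ t ω + μ₂ * t)) :=
        mul_le_mul_of_nonpos_left (hlb ω) hc
      have hHe : H ω = rexp ((a*μ₁ - c*μ₂)*t + a * B₁ t ω + -c * B₂ t ω) := by
        rw [hH, hX, hYf]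
        simp only
        rw [← Real.exp_add, ← Real.exp_add]
        congr 1
        ring
      rw [hHe]
      apply exp_le_exp.mpr
      have heq : a * (B₁ t ω + μ₁ * t + r * ℓ t ω) = a * B₁ t ω + a*μ₁*t + c * ℓ t ω := by
        rw [hcdef]; ring
      nlinarith [h1]
    have intZ : Integrable (fun ω => rexp (a * (B₁ t ω + μ₁ * t + r * ℓ t ω))) ℙ := by
      refine Integrable.mono' intH hZmeas.aestronglyMeasurable ?_
      exact Eventually.of_forall fun ω => by
        rw [Real.norm_eq_abs, abs_of_nonneg (hZnn ω)]; exact hcmp ω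
    refine ⟨hℓmeas, intZ, ?_⟩
    have h3 : ∫ ω, rexp (a * (B₁ t ω + μ₁ * t + r * ℓ t ω)) ∂ℙ ≤ ∫ ω, H ω ∂ℙ :=
      integral_mono intZ intH hcmp
    have h4 : ∫ ω, H ω ∂ℙ = rexp (K * t) := by
      calc ∫ ω, H ω ∂ℙ = rexp ((a*μ₁ - c*μ₂)*t) * ∫ ω, X ω * Yf ω ∂ℙ := integral_const_mul _ _
        _ = rexp ((a*μ₁ - c*μ₂)*t) * (rexp (a^2*t/2) * rexp ((-c)^2*t/2)) := by rw [hEXY]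
        _ = rexp (K * t) := by
            rw [← Real.exp_add, ← Real.exp_add]
            congr 1
            rw [hK, hcdef]; ring
    have h5 : (0:ℝ) < rexp (K * t) := exp_pos _
    calc ∫ ω, rexp (a * (B₁ t ω + μ₁ * t + r * ℓ t ω)) ∂ℙ ≤ ∫ ω, H ω ∂ℙ := h3
      _ = rexp (K*t) := h4
      _ ≤ 4 * rexp (K*t) := by linarith
  · -- 0 < c : use the running-sup upper bound for ℓ and the Doob grid bound
    set Sf : Ω → ℝ := fun ω => sSup ((fun s : ℝ => -B₂ s ω) '' Set.Icc 0 t) with hSf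
    have hbddS : ∀ ω, BddAbove ((fun s : ℝ => -B₂ s ω) '' Set.Icc 0 t) :=
      fun ω => (isCompact_Icc.image (hcB2 ω).neg).bddAbove
    have hub : ∀ ω, ℓ t ω ≤ (-μ₂)*t + Sf ω := by
      intro ω
      rw [hℓ t ω]
      have h1 : -((-μ₂)*t + Sf ω) ≤ sInf ((fun s : ℝ => B₂ s ω + μ₂ * s) '' Set.Icc 0 t) := by
        apply le_csInf (Set.Nonempty.image _ (Set.nonempty_Icc.mpr ht))
        rintro x ⟨s, hs, rfl⟩
        have hBle : -B₂ s ω ≤ Sf ω := le_csSup (hbddS ω) ⟨s, hs, rfl⟩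
        have hμs : μ₂ * t ≤ μ₂ * s := by nlinarith [hs.2, hμ₂.le]
        simp only
        linarith
      linarith
    set D : ℕ → Ω → ℝ := fun m ω => pmax (fun k => -B₂ (grid t m k) ω) (2^m) with hD
    have hdyn : ∀ ω : Ω, (∀ m, D m ω ≤ Sf ω) ∧ (Monotone fun m => D m ω) ∧
        Tendsto (fun m => D m ω) atTop (nhds (Sf ω)) := fun ω => dyadic_sup (hcB2 ω).neg ht
    have hDmeas : ∀ m, Measurable (D m) := fun m => measurable_pmax (fun k => (hB₂.2.2.1 _).neg) (2^m)
    have hgb : ∀ m, Integrable (fun ω => rexp (c * D m ω)) ℙ ∧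
        ∫ ω, rexp (c * D m ω) ∂ℙ ≤ 4 * rexp (c^2 * t / 2) := fun m => grid_bound hB₂ ht hc m
    set C0 : ℝ := rexp ((a*μ₁ + c*(-μ₂))*t) with hC0
    set X : Ω → ℝ := fun ω => rexp (a * B₁ t ω) with hX
    set G : ℕ → Ω → ℝ := fun m ω => C0 * (X ω * rexp (c * D m ω)) with hG
    have hindXD : ∀ m, IndepFun X (fun ω => rexp (c * D m ω)) ℙ := by
      intro m
      have h := hind.comp (φ := fun p : ℝ → ℝ => rexp (a * p t))
        (ψ := fun p : ℝ → ℝ => rexp (c * pmax (fun k => -p (grid t m k)) (2^m)))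
        (by fun_prop)
        (((measurable_pmax (g := fun k (p : ℝ → ℝ) => -p (grid t m k))
            (fun k => (measurable_pi_apply (grid t m k)).neg) (2^m)).const_mul c).exp)
      exact h
    have intG : ∀ m, Integrable (G m) ℙ :=
      fun m => (((hindXD m).integrable_mul hexp1.1 (hgb m).1).const_mul _)
    have hEG : ∀ m, ∫ ω, G m ω ∂ℙ ≤ 4 * rexp (K*t) := by
      intro m
      have h2 : ∫ ω, X ω * rexp (c * D m ω) ∂ℙ
          = (∫ ω, X ω ∂ℙ) * ∫ ω, rexp (c * D m ω) ∂ℙ :=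
        (hindXD m).integral_fun_mul_eq_mul_integral hexp1.1.1 (hgb m).1.1
      have h3 : ∫ ω, G m ω ∂ℙ = C0 * ((∫ ω, X ω ∂ℙ) * ∫ ω, rexp (c * D m ω) ∂ℙ) := by
        rw [← h2]; exact integral_const_mul _ _
      rw [h3, hexp1.2]
      have h4 : (∫ ω, rexp (c * D m ω) ∂ℙ) ≤ 4 * rexp (c^2*t/2) := (hgb m).2
      have h5 : (0:ℝ) ≤ ∫ ω, rexp (c * D m ω) ∂ℙ := integral_nonneg fun ω => (exp_pos _).le
      have h6 : C0 * (rexp (a^2*t/2) * (4 * rexp (c^2*t/2))) = 4 * rexp (K*t) := by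
        have h7 : C0 * (rexp (a^2*t/2) * (4 * rexp (c^2*t/2)))
            = 4 * (C0 * rexp (a^2*t/2) * rexp (c^2*t/2)) := by ring
        rw [h7, hC0, ← Real.exp_add, ← Real.exp_add]
        congr 1
        rw [hK, hcdef]; ring
      have h8 : (0:ℝ) < C0 := exp_pos _
      rw [← h6]
      refine mul_le_mul_of_nonneg_left ?_ h8.le
      exact mul_le_mul_of_nonneg_left h4 (exp_pos _).le
    set F : Ω → ℝ := fun ω => C0 * (X ω * rexp (c * Sf ω)) with hF
    have hGF : ∀ ω, Tendsto (fun m => G m ω) atTop (nhds (F ω)) := by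
      intro ω
      have hco : Continuous fun x : ℝ => C0 * (X ω * rexp (c * x)) := by
        exact continuous_const.mul (continuous_const.mul ((continuous_const.mul continuous_id).rexp))
      exact (hco.tendsto _).comp (hdyn ω).2.2
    have hGmono : ∀ ω, Monotone fun m => G m ω := by
      intro ω m m' hmm
      have h1 := (hdyn ω).2.1 hmm
      have h2 : rexp (c * D m ω) ≤ rexp (c * D m' ω) :=
        exp_le_exp.mpr (mul_le_mul_of_nonneg_left h1 hc.le)
      have h8 : (0:ℝ) < C0 := exp_pos _
      have h9 : (0:ℝ) < X ω := exp_pos _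
      have : X ω * rexp (c * D m ω) ≤ X ω * rexp (c * D m' ω) :=
        mul_le_mul_of_nonneg_left h2 h9.le
      exact mul_le_mul_of_nonneg_left this h8.le
    have hGmeas : ∀ m, Measurable (G m) := fun m =>
      measurable_const.mul ((((hB₁.2.2.1 t).const_mul a).exp).mul (((hDmeas m).const_mul c).exp))
    have hGnn : ∀ m ω, (0:ℝ) ≤ G m ω := by
      intro m ω
      have h8 : (0:ℝ) < C0 := exp_pos _
      have h9 : (0:ℝ) < X ω := exp_pos _
      positivity
    have hlint := lintegral_tendsto_of_tendsto_of_monotone (μ := ℙ)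
      (f := fun m ω => ENNReal.ofReal (G m ω)) (F := fun ω => ENNReal.ofReal (F ω))
      (fun m => ((hGmeas m).ennreal_ofReal).aemeasurable)
      (ae_of_all _ fun ω m m' h => ENNReal.ofReal_le_ofReal (hGmono ω h))
      (ae_of_all _ fun ω => (ENNReal.continuous_ofReal.tendsto _).comp (hGF ω))
    have hFbound : ∫⁻ ω, ENNReal.ofReal (F ω) ∂ℙ ≤ ENNReal.ofReal (4 * rexp (K*t)) := by
      refine le_of_tendsto hlint (Eventually.of_forall fun m => ?_)
      rw [← ofReal_integral_eq_lintegral_ofReal (intG m) (ae_of_all _ fun ω => hGnn m ω)]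
      exact ENNReal.ofReal_le_ofReal (hEG m)
    have hcmp : ∀ ω, rexp (a * (B₁ t ω + μ₁ * t + r * ℓ t ω)) ≤ F ω := by
      intro ω
      have h1 : c * ℓ t ω ≤ c * ((-μ₂)*t + Sf ω) := mul_le_mul_of_nonneg_left (hub ω) hc.le
      have hFe : F ω = rexp ((a*μ₁ + c*(-μ₂))*t + a * B₁ t ω + c * Sf ω) := by
        rw [hF, hC0, hX]
        simp only
        rw [← Real.exp_add, ← Real.exp_add]
        congr 1
        ring
      rw [hFe]
      apply exp_le_exp.mpr
      have heq : a * (B₁ t ω + μ₁ * t + r * ℓ t ω) = a * B₁ t ω + a*μ₁*t + c * ℓ t ω := by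
        rw [hcdef]; ring
      nlinarith [h1]
    have hZlint : ∫⁻ ω, ENNReal.ofReal (rexp (a * (B₁ t ω + μ₁ * t + r * ℓ t ω))) ∂ℙ
        ≤ ENNReal.ofReal (4 * rexp (K*t)) := by
      refine le_trans (lintegral_mono fun ω => ENNReal.ofReal_le_ofReal (hcmp ω)) hFbound
    have intZ : Integrable (fun ω => rexp (a * (B₁ t ω + μ₁ * t + r * ℓ t ω))) ℙ := by
      refine ⟨hZmeas.aestronglyMeasurable, ?_⟩
      rw [hasFiniteIntegral_iff_ofReal (ae_of_all _ hZnn)]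
      exact lt_of_le_of_lt hZlint ENNReal.ofReal_lt_top
    refine ⟨hℓmeas, intZ, ?_⟩
    rw [integral_eq_lintegral_of_nonneg_ae (ae_of_all _ hZnn) hZmeas.aestronglyMeasurable]
    have h2 : (∫⁻ ω, ENNReal.ofReal (rexp (a * (B₁ t ω + μ₁ * t + r * ℓ t ω))) ∂ℙ).toReal
        ≤ (ENNReal.ofReal (4 * rexp (K*t))).toReal :=
      ENNReal.toReal_mono ENNReal.ofReal_ne_top hZlint
    rwa [ENNReal.toReal_ofReal (by positivity)] at h2

/-- Bound on the MGF of obliquely reflected Brownian motion on the set `F`: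
for `0 < a = Re θ₁ < 2(rμ₂−μ₁)/(r²+1)` and `Re θ₂ ≤ 0`,
`|E[e^{θ·Z(t)}]| ≤ 8 e^{(a(μ₁+rμ₂⁻)+a²/2+a²r²/2)t}`, the exponent is negative,
`E[e^{θ·Z(t)}] → 0` as `t → ∞`, and `∫₀^∞ E[e^{θ·Z(s)}]ds` converges. -/
theorem stmt_13 {Ω : Type*} [MeasureSpace Ω] [IsProbabilityMeasure (ℙ : Measure Ω)]
    (B₁ B₂ : ℝ → Ω → ℝ) (hB₁ : IsBrownian B₁ ℙ) (hB₂ : IsBrownian B₂ ℙ)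
    (hind : IndepFun (fun ω => fun t => B₁ t ω) (fun ω => fun t => B₂ t ω) ℙ)
    (μ₁ μ₂ r : ℝ) (hμ₂ : μ₂ < 0) (hdrift : r * μ₂ - μ₁ > 0)
    (ℓ : ℝ → Ω → ℝ)
    (hℓ : ∀ t ω, ℓ t ω = -sInf ((fun s => B₂ s ω + μ₂ * s) '' Set.Icc 0 t))
    (Z₁ Z₂ : ℝ → Ω → ℝ)
    (hZ₁ : ∀ t ω, Z₁ t ω = B₁ t ω + μ₁ * t + r * ℓ t ω)
    (hZ₂ : ∀ t ω, Z₂ t ω = B₂ t ω + μ₂ * t + ℓ t ω)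
    (θ₁ θ₂ : ℂ) (ha0 : 0 < θ₁.re) (hap : θ₁.re < 2 * (r * μ₂ - μ₁) / (r ^ 2 + 1))
    (hθ₂ : θ₂.re ≤ 0) :
    (∀ t : ℝ, 0 ≤ t →
      ‖∫ ω, Complex.exp (θ₁ * (Z₁ t ω : ℂ) + θ₂ * (Z₂ t ω : ℂ)) ∂ℙ‖
        ≤ 8 * Real.exp ((θ₁.re * (μ₁ + r * max (-μ₂) 0)
            + θ₁.re ^ 2 / 2 + θ₁.re ^ 2 * r ^ 2 / 2) * t)) ∧
    (θ₁.re * (μ₁ + r * max (-μ₂) 0) + θ₁.re ^ 2 * (1 + r ^ 2) / 2 < 0) ∧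
    Tendsto (fun t : ℝ => ∫ ω, Complex.exp (θ₁ * (Z₁ t ω : ℂ) + θ₂ * (Z₂ t ω : ℂ)) ∂ℙ)
      atTop (nhds 0) ∧
    IntegrableOn
      (fun s : ℝ => ∫ ω, Complex.exp (θ₁ * (Z₁ s ω : ℂ) + θ₂ * (Z₂ s ω : ℂ)) ∂ℙ)
      (Set.Ioi 0) := by
  have hmax : max (-μ₂) 0 = -μ₂ := max_eq_left (by linarith)
  set a : ℝ := θ₁.re with hadef
  set E : ℝ := a * (μ₁ + r * max (-μ₂) 0) + a ^ 2 / 2 + a ^ 2 * r ^ 2 / 2 with hE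
  -- the exponent is negative
  have hr2 : (0:ℝ) < r^2 + 1 := by positivity
  have hlt : a * (r^2+1) < 2 * (r * μ₂ - μ₁) := by
    have := (lt_div_iff₀ hr2).mp hap
    linarith
  have hEneg : E < 0 := by
    rw [hE, hmax]
    nlinarith [mul_lt_mul_of_pos_left hlt ha0]
  -- norm of the integrand
  have hnorm : ∀ z₁ z₂ : ℝ, ‖Complex.exp (θ₁ * (z₁:ℂ) + θ₂ * (z₂:ℂ))‖
      = rexp (θ₁.re * z₁ + θ₂.re * z₂) := by
    intro z₁ z₂
    rw [Complex.norm_exp]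
    congr 1
    simp [Complex.add_re, Complex.mul_re, Complex.ofReal_re, Complex.ofReal_im]
  -- Z₂ is nonnegative
  have hZ₂nn : ∀ t : ℝ, 0 ≤ t → ∀ ω, 0 ≤ Z₂ t ω := by
    intro t ht ω
    rw [hZ₂, hℓ]
    have hbb : BddBelow ((fun s : ℝ => B₂ s ω + μ₂ * s) '' Set.Icc 0 t) :=
      (isCompact_Icc.image ((hB₂.2.1 ω).add (continuous_const.mul continuous_id))).bddBelow
    have h1 : sInf ((fun s : ℝ => B₂ s ω + μ₂ * s) '' Set.Icc 0 t) ≤ B₂ t ω + μ₂ * t :=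
      csInf_le hbb ⟨t, ⟨ht, le_rfl⟩, rfl⟩
    linarith
  -- part 1
  have hpart1 : ∀ t : ℝ, 0 ≤ t →
      ‖∫ ω, Complex.exp (θ₁ * (Z₁ t ω : ℂ) + θ₂ * (Z₂ t ω : ℂ)) ∂ℙ‖ ≤ 8 * rexp (E * t) := by
    intro t ht
    obtain ⟨hℓm, hint, hbound⟩ :=
      key_bound B₁ B₂ hB₁ hB₂ hind μ₁ μ₂ r hμ₂ ℓ hℓ ha0 ht
    have hZeq : (fun ω => rexp (a * (B₁ t ω + μ₁ * t + r * ℓ t ω)))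
        = fun ω => rexp (a * Z₁ t ω) := funext fun ω => by rw [hZ₁]
    rw [hZeq] at hint hbound
    have h4le : 4 * rexp ((a * (μ₁ + r * (-μ₂)) + a^2/2 + a^2*r^2/2) * t) ≤ 8 * rexp (E * t) := by
      have he : (a * (μ₁ + r * (-μ₂)) + a^2/2 + a^2*r^2/2) = E := by rw [hE, hmax]
      rw [he]
      have := exp_pos (E * t)
      linarith
    calc ‖∫ ω, Complex.exp (θ₁ * (Z₁ t ω : ℂ) + θ₂ * (Z₂ t ω : ℂ)) ∂ℙ‖
        ≤ ∫ ω, ‖Complex.exp (θ₁ * (Z₁ t ω : ℂ) + θ₂ * (Z₂ t ω : ℂ))‖ ∂ℙ :=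
          norm_integral_le_integral_norm _
      _ ≤ ∫ ω, rexp (a * Z₁ t ω) ∂ℙ := by
          refine integral_mono_of_nonneg (Eventually.of_forall fun ω => norm_nonneg _) hint
            (Eventually.of_forall fun ω => ?_)
          show ‖Complex.exp (θ₁ * (Z₁ t ω : ℂ) + θ₂ * (Z₂ t ω : ℂ))‖ ≤ rexp (a * Z₁ t ω)
          rw [hnorm]
          apply exp_le_exp.mpr
          have h2 : θ₂.re * Z₂ t ω ≤ 0 :=
            mul_nonpos_iff.mpr (Or.inr ⟨hθ₂, hZ₂nn t ht ω⟩)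
          linarith
      _ ≤ 4 * rexp ((a * (μ₁ + r * (-μ₂)) + a^2/2 + a^2*r^2/2) * t) := hbound
      _ ≤ 8 * rexp (E * t) := h4le
  have hpart2 : θ₁.re * (μ₁ + r * max (-μ₂) 0) + θ₁.re ^ 2 * (1 + r ^ 2) / 2 < 0 := by
    have he : θ₁.re * (μ₁ + r * max (-μ₂) 0) + θ₁.re ^ 2 * (1 + r ^ 2) / 2 = E := by
      rw [hE]; ring
    rw [he]; exact hEneg
  refine ⟨hpart1, hpart2, ?_, ?_⟩
  · -- tendsto 0
    have h1 : Tendsto (fun t : ℝ => E * t) atTop atBot :=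
      tendsto_id (α := ℝ) |>.const_mul_atTop_of_neg hEneg
    have h2 := (Real.tendsto_exp_atBot.comp h1).const_mul (8:ℝ)
    refine squeeze_zero_norm' ?_ (by simpa using h2)
    filter_upwards [eventually_ge_atTop (0:ℝ)] with t ht
    exact hpart1 t ht
  · -- integrability on (0, ∞)
    -- joint measurability
    have hB2j : Measurable (Function.uncurry B₂) :=
      measurable_uncurry_of_continuous_of_measurable hB₂.2.1 hB₂.2.2.1
    have hB1j : Measurable (Function.uncurry B₁) :=
      measurable_uncurry_of_continuous_of_measurable hB₁.2.1 hB₁.2.2.1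
    have hgridmeas : ∀ m k, Measurable (fun p : ℝ × Ω => B₂ (grid (max p.1 0) m k) p.2) := by
      intro m k
      have hg : Continuous (fun s : ℝ => grid (max s 0) m k) := by
        have : (fun s : ℝ => grid (max s 0) m k)
            = fun s : ℝ => (max s 0) * (min k (2^m) : ℕ) / (2:ℝ)^m := by
          funext s; rw [grid_def]
        rw [this]
        exact ((continuous_id.max continuous_const).mul continuous_const).div_const _
      exact hB2j.comp ((hg.measurable.comp measurable_fst).prodMk measurable_snd)
    have hΛm : ∀ m, Measurable (fun p : ℝ × Ω =>
        pmax (fun k => -(B₂ (grid (max p.1 0) m k) p.2 + μ₂ * grid (max p.1 0) m k)) (2^m)) := by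
      intro m
      refine measurable_pmax (fun k => ?_) (2^m)
      have hg2 : Measurable (fun p : ℝ × Ω => μ₂ * grid (max p.1 0) m k) := by
        have : Continuous (fun s : ℝ => μ₂ * grid (max s 0) m k) := by
          have h3 : (fun s : ℝ => grid (max s 0) m k)
              = fun s : ℝ => (max s 0) * (min k (2^m) : ℕ) / (2:ℝ)^m := by
            funext s; rw [grid_def]
          refine continuous_const.mul ?_
          rw [h3]
          exact ((continuous_id.max continuous_const).mul continuous_const).div_const _
        exact this.measurable.comp measurable_fst
      exact ((hgridmeas m k).add hg2).neg
    have hΛ : Measurable (fun p : ℝ × Ω => ℓ (max p.1 0) p.2) := by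
      apply measurable_of_tendsto_metrizable
        (f := fun m p => pmax (fun k =>
          -(B₂ (grid (max p.1 0) m k) p.2 + μ₂ * grid (max p.1 0) m k)) (2^m)) hΛm
      rw [tendsto_pi_nhds]
      intro p
      have hcg : Continuous fun s : ℝ => -(B₂ s p.2 + μ₂ * s) :=
        ((hB₂.2.1 p.2).add (continuous_const.mul continuous_id)).neg
      have hls : ℓ (max p.1 0) p.2
          = sSup ((fun s : ℝ => -(B₂ s p.2 + μ₂ * s)) '' Set.Icc 0 (max p.1 0)) := by
        rw [hℓ, neg_sInf_image]
      rw [hls]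
      exact (dyadic_sup hcg (le_max_right _ _)).2.2
    -- joint strong measurability of the integrand on the shifted function
    have hmeasJ : StronglyMeasurable (fun p : ℝ × Ω =>
        Complex.exp (θ₁ * ((B₁ p.1 p.2 + μ₁ * p.1 + r * ℓ (max p.1 0) p.2 : ℝ) : ℂ)
          + θ₂ * ((B₂ p.1 p.2 + μ₂ * p.1 + ℓ (max p.1 0) p.2 : ℝ) : ℂ))) := by
      apply Measurable.stronglyMeasurable
      apply Measurable.cexp
      apply Measurable.add
      · apply Measurable.const_mul
        apply Complex.measurable_ofReal.comp
        exact ((hB1j.add (measurable_fst.const_mul μ₁)).add (hΛ.const_mul r))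
      · apply Measurable.const_mul
        apply Complex.measurable_ofReal.comp
        exact ((hB2j.add (measurable_fst.const_mul μ₂)).add hΛ)
    have hFhat : StronglyMeasurable (fun s : ℝ => ∫ ω,
        Complex.exp (θ₁ * ((B₁ s ω + μ₁ * s + r * ℓ (max s 0) ω : ℝ) : ℂ)
          + θ₂ * ((B₂ s ω + μ₂ * s + ℓ (max s 0) ω : ℝ) : ℂ)) ∂ℙ) :=
      hmeasJ.integral_prod_right'
    have haesm : AEStronglyMeasurable
        (fun s : ℝ => ∫ ω, Complex.exp (θ₁ * (Z₁ s ω : ℂ) + θ₂ * (Z₂ s ω : ℂ)) ∂ℙ)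
        (volume.restrict (Set.Ioi (0:ℝ))) := by
      refine hFhat.aestronglyMeasurable.restrict.congr ?_
      refine (MeasureTheory.ae_restrict_iff' measurableSet_Ioi).mpr
        (Eventually.of_forall fun s hs => ?_)
      have hmax2 : max s 0 = s := max_eq_left (le_of_lt hs)
      show (∫ ω, Complex.exp (θ₁ * ((B₁ s ω + μ₁ * s + r * ℓ (max s 0) ω : ℝ) : ℂ)
          + θ₂ * ((B₂ s ω + μ₂ * s + ℓ (max s 0) ω : ℝ) : ℂ)) ∂ℙ)
        = ∫ ω, Complex.exp (θ₁ * (Z₁ s ω : ℂ) + θ₂ * (Z₂ s ω : ℂ)) ∂ℙ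
      have hfun : (fun ω => Complex.exp (θ₁ * ((B₁ s ω + μ₁ * s + r * ℓ (max s 0) ω : ℝ) : ℂ)
          + θ₂ * ((B₂ s ω + μ₂ * s + ℓ (max s 0) ω : ℝ) : ℂ)))
          = fun ω => Complex.exp (θ₁ * (Z₁ s ω : ℂ) + θ₂ * (Z₂ s ω : ℂ)) := by
        funext ω
        rw [hmax2, hZ₁, hZ₂]
      rw [hfun]
    -- majorant
    have hmaj : IntegrableOn (fun s : ℝ => 8 * rexp (E * s)) (Set.Ioi (0:ℝ)) := by
      have hb : (0:ℝ) < -E := by linarith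
      have h1 := exp_neg_integrableOn_Ioi 0 hb
      have h2 : (fun x : ℝ => rexp (-(-E) * x)) = fun x => rexp (E * x) := by
        funext x; congr 1; ring
      rw [h2] at h1
      exact h1.const_mul 8
    refine Integrable.mono' hmaj haesm ?_
    refine (MeasureTheory.ae_restrict_iff' measurableSet_Ioi).mpr
      (Eventually.of_forall fun s hs => hpart1 s (le_of_lt hs))
end

section
/- Let μ₂ < 0 and α ∈ (0,π), and define S(a+ib) implicitly by Re S(a+ib) = a cos α − μ₂ sin α + sin α · Re √(μ₁²+μ₂² − (a+ib+μ₁)²) for a ∈ [θ₁⁻, θ₁⁺], b ∈ ℝ (principal branch of square root). Then for each fixed a ∈ [θ₁⁻, θ₁⁺], the function b ↦ Re S(a+ib) is nondecreasing on [0,∞) and nonincreasing on (−∞,0], and there exist constants c₁ > 0, c₂ > 0, B > 0 such that inf_{a ∈ [θ₁⁻,θ₁⁺]} Re S(a+ib) ≥ −c₁ + c₂ sin α · |b| for all |b| ≥ B. -/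
open Complex

/-! `Re √z = √((‖z‖ + Re z) / 2)`. For `z = R - (w + b i)²` with `w² ≤ R` both `Re z = R - w² + b²`
and `|Im z| = 2|w b|` grow with `|b|`, so `Re √z` does too, and `Re √z ≥ √(Re z) ≥ |b|`. Since
`sin α > 0` and `-μ₂ sin α > 0`, the monotonicity and the bound `Re S ≥ -(|μ₁| + √R) + sin α |b|`
follow. -/

namespace Complex

lemma re_cpow_half_le_of_re_le_of_norm_le {z z' : ℂ} (hre : z.re ≤ z'.re) (hnorm : ‖z‖ ≤ ‖z'‖) :
    (z ^ (1 / 2 : ℂ)).re ≤ (z' ^ (1 / 2 : ℂ)).re := by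
  rw [one_div, cpow_inv_two_re, cpow_inv_two_re]
  gcongr

lemma sqrt_re_le_re_cpow_half (z : ℂ) : √z.re ≤ (z ^ (1 / 2 : ℂ)).re := by
  rw [one_div, cpow_inv_two_re]
  gcongr
  linarith [re_le_norm z]

variable (R w b : ℝ)

lemma re_ofReal_sub_sq : ((R : ℂ) - ((w : ℂ) + b * I) ^ 2).re = R - w ^ 2 + b ^ 2 := by
  simp [sq]; ring

lemma im_ofReal_sub_sq : ((R : ℂ) - ((w : ℂ) + b * I) ^ 2).im = -(2 * w * b) := by
  simp [sq]; ring

variable {R w b}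

lemma abs_le_re_cpow_half_ofReal_sub_sq (hw : w ^ 2 ≤ R) :
    |b| ≤ (((R : ℂ) - ((w : ℂ) + b * I) ^ 2) ^ (1 / 2 : ℂ)).re := by
  refine le_trans ?_ (sqrt_re_le_re_cpow_half _)
  rw [re_ofReal_sub_sq, ← Real.sqrt_sq_eq_abs]
  gcongr
  linarith

lemma re_cpow_half_ofReal_sub_sq_le {b₁ b₂ : ℝ} (hw : w ^ 2 ≤ R) (hb : b₁ ^ 2 ≤ b₂ ^ 2) :
    (((R : ℂ) - ((w : ℂ) + b₁ * I) ^ 2) ^ (1 / 2 : ℂ)).re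
      ≤ (((R : ℂ) - ((w : ℂ) + b₂ * I) ^ 2) ^ (1 / 2 : ℂ)).re := by
  have hre : (R - w ^ 2 + b₁ ^ 2) ≤ (R - w ^ 2 + b₂ ^ 2) := by linarith
  have him : (-(2 * w * b₁)) ^ 2 ≤ (-(2 * w * b₂)) ^ 2 := by
    simp only [neg_sq, mul_pow]
    gcongr
  apply re_cpow_half_le_of_re_le_of_norm_le (by simpa only [re_ofReal_sub_sq])
  simp only [norm_eq_sqrt_sq_add_sq, re_ofReal_sub_sq, im_ofReal_sub_sq]
  gcongr

end Complex

/-- Monotonicity in `|b|` of `Re S(a+ib)` and a linear lower bound far from the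
real axis, where `S(θ₁) = θ₁ cos α + Θ₂⁺(θ₁) sin α` with the principal branch
of the complex square root. -/
theorem stmt_15 (μ₁ μ₂ : ℝ) (hμ₂ : μ₂ < 0) (α : ℝ) (hα : α ∈ Set.Ioo 0 Real.pi) :
    (∀ a ∈ Set.Icc (-μ₁ - Real.sqrt (μ₁ ^ 2 + μ₂ ^ 2)) (-μ₁ + Real.sqrt (μ₁ ^ 2 + μ₂ ^ 2)),
      MonotoneOn (fun b : ℝ =>
          a * Real.cos α - μ₂ * Real.sin α + Real.sin α *
            ((((μ₁ ^ 2 + μ₂ ^ 2 : ℝ) : ℂ)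
              - ((a : ℂ) + (b : ℂ) * Complex.I + (μ₁ : ℂ)) ^ 2) ^ ((1 : ℂ) / 2)).re)
        (Set.Ici 0) ∧
      AntitoneOn (fun b : ℝ =>
          a * Real.cos α - μ₂ * Real.sin α + Real.sin α *
            ((((μ₁ ^ 2 + μ₂ ^ 2 : ℝ) : ℂ)
              - ((a : ℂ) + (b : ℂ) * Complex.I + (μ₁ : ℂ)) ^ 2) ^ ((1 : ℂ) / 2)).re)
        (Set.Iic 0)) ∧
    (∃ c₁ > (0 : ℝ), ∃ c₂ > (0 : ℝ), ∃ B > (0 : ℝ), ∀ b : ℝ, B ≤ |b| →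
      ∀ a ∈ Set.Icc (-μ₁ - Real.sqrt (μ₁ ^ 2 + μ₂ ^ 2)) (-μ₁ + Real.sqrt (μ₁ ^ 2 + μ₂ ^ 2)),
        -c₁ + c₂ * Real.sin α * |b|
          ≤ a * Real.cos α - μ₂ * Real.sin α + Real.sin α *
              ((((μ₁ ^ 2 + μ₂ ^ 2 : ℝ) : ℂ)
                - ((a : ℂ) + (b : ℂ) * Complex.I + (μ₁ : ℂ)) ^ 2) ^ ((1 : ℂ) / 2)).re) := by
  set R := μ₁ ^ 2 + μ₂ ^ 2
  have hsin : 0 < Real.sin α := Real.sin_pos_of_pos_of_lt_pi hα.1 hα.2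
  have hshift (a b : ℝ) : (a : ℂ) + b * I + μ₁ = ((a + μ₁ : ℝ) : ℂ) + b * I := by
    push_cast; ring
  have hsq {a : ℝ} (ha : a ∈ Set.Icc (-μ₁ - √R) (-μ₁ + √R)) : (a + μ₁) ^ 2 ≤ R :=
    (Real.sq_le (by positivity)).2 ⟨by linarith [ha.1], by linarith [ha.2]⟩
  simp only [hshift]
  have hc₁ : 0 < |μ₁| + √R := by have := hμ₂.ne; positivity
  refine ⟨fun a ha => ⟨?_, ?_⟩, ⟨|μ₁| + √R, hc₁, 1, one_pos, 1, one_pos, ?_⟩⟩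
  · intro b₁ hb₁ b₂ _ hle
    beta_reduce
    gcongr _ + _ * ?_
    exact re_cpow_half_ofReal_sub_sq_le (hsq ha) (pow_le_pow_left₀ hb₁ hle 2)
  · intro b₁ _ b₂ hb₂ hle
    beta_reduce
    gcongr _ + _ * ?_
    exact re_cpow_half_ofReal_sub_sq_le (hsq ha) (by nlinarith [Set.mem_Iic.1 hb₂])
  · intro b _ a ha
    have hb := abs_le_re_cpow_half_ofReal_sub_sq (b := b) (hsq ha)
    have ha' : |a| ≤ |μ₁| + √R := by
      have := Real.abs_le_sqrt (hsq ha)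
      calc |a| = |(a + μ₁) - μ₁| := by rw [add_sub_cancel_right]
        _ ≤ |a + μ₁| + |μ₁| := abs_sub _ _
        _ ≤ |μ₁| + √R := by linarith
    have hcos : -|a| ≤ a * Real.cos α := by
      have : |a * Real.cos α| ≤ |a| := by
        rw [abs_mul]
        exact mul_le_of_le_one_right (abs_nonneg a) (Real.abs_cos_le_one α)
      linarith [neg_abs_le (a * Real.cos α)]
    nlinarith [mul_le_mul_of_nonneg_left hb hsin.le, mul_pos (neg_pos.2 hμ₂) hsin]
end

section
/- Let μ₂ < 0, μ₁, r ∈ ℝ, and define on the closed upper half-plane h(x₁,x₂) = e^{θᵖ̃·x} with θᵖ̃ = (θ₁ᵖ, Θ₂⁻(θ₁ᵖ)), where θ₁ᵖ = 2(rμ₂−μ₁)/(r²+1) and Θ₂⁻(θ₁) = −μ₂ − √((μ₁²+μ₂²) − (θ₁+μ₁)²). Then h satisfies Lh = 0 on the open upper half-plane and R·∇h = 0 on the boundary {x₂ = 0}, where L = (1/2)Δ + μ·∇ and R = (r,1). -/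
private lemma deriv_exp_affine (a c : ℝ) :
    deriv (fun y => Real.exp (a * y + c)) = fun x => a * Real.exp (a * x + c) := by
  funext x
  have h1 : HasDerivAt (fun y : ℝ => a * y + c) a x := by
    simpa using ((hasDerivAt_id x).const_mul a).add_const c
  have := h1.exp
  rw [this.deriv]; ring

private lemma deriv2_exp_affine (a c : ℝ) (x : ℝ) :
    deriv (deriv (fun y => Real.exp (a * y + c))) x = a * a * Real.exp (a * x + c) := by
  rw [deriv_exp_affine]
  have h1 : HasDerivAt (fun y : ℝ => a * y + c) a x := by
    simpa using ((hasDerivAt_id x).const_mul a).add_const c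
  have h2 := (h1.exp).const_mul a
  rw [h2.deriv]; ring

/-- `h(x) = e^{θ̃ᵖ·x}` with `θ̃ᵖ = (θ₁ᵖ, Θ₂⁻(θ₁ᵖ))` satisfies `Lh = 0` on the
open upper half-plane and the oblique Neumann condition `R·∇h = 0` on the
boundary, where `L = (1/2)Δ + μ·∇` and `R = (r,1)`. -/
theorem stmt_18 (μ₁ μ₂ r : ℝ) (hμ₂ : μ₂ < 0) (hdrift : r * μ₂ - μ₁ > 0)
    (hpole : (r ^ 2 - 1) * μ₂ - 2 * r * μ₁ > 0)
    (h : ℝ → ℝ → ℝ)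
    (hdef : ∀ x₁ x₂ : ℝ, h x₁ x₂ =
      Real.exp ((2 * (r * μ₂ - μ₁) / (r ^ 2 + 1)) * x₁
        + (-μ₂ - Real.sqrt ((μ₁ ^ 2 + μ₂ ^ 2)
            - (2 * (r * μ₂ - μ₁) / (r ^ 2 + 1) + μ₁) ^ 2)) * x₂)) :
    (∀ x₁ x₂ : ℝ, 0 < x₂ →
      (1 / 2) * (deriv (deriv (fun y => h y x₂)) x₁ + deriv (deriv (fun y => h x₁ y)) x₂)
        + μ₁ * deriv (fun y => h y x₂) x₁ + μ₂ * deriv (fun y => h x₁ y) x₂ = 0) ∧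
    (∀ x₁ : ℝ, r * deriv (fun y => h y 0) x₁ + deriv (fun y => h x₁ y) 0 = 0) := by
  have hden : (r ^ 2 + 1) ≠ 0 := by positivity
  set A : ℝ := 2 * (r * μ₂ - μ₁) / (r ^ 2 + 1) with hA
  set S : ℝ := ((r ^ 2 - 1) * μ₂ - 2 * r * μ₁) / (r ^ 2 + 1) with hSdef
  have hSpos : 0 ≤ S := by
    apply div_nonneg hpole.le; positivity
  have hsqrt : Real.sqrt ((μ₁ ^ 2 + μ₂ ^ 2) - (A + μ₁) ^ 2) = S := by
    have : (μ₁ ^ 2 + μ₂ ^ 2) - (A + μ₁) ^ 2 = S ^ 2 := by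
      rw [hA, hSdef]; field_simp; ring
    rw [this, Real.sqrt_sq hSpos]
  set B : ℝ := -μ₂ - Real.sqrt ((μ₁ ^ 2 + μ₂ ^ 2) - (A + μ₁) ^ 2) with hB
  have hBS : B = -μ₂ - S := by rw [hB, hsqrt]
  have hL : A * A + B * B + 2 * μ₁ * A + 2 * μ₂ * B = 0 := by
    rw [hBS, hA, hSdef]; field_simp; ring
  have hR : r * A + B = 0 := by
    rw [hBS, hA, hSdef]; field_simp; ring
  have hx : ∀ x₂ : ℝ, (fun y => h y x₂) = fun y => Real.exp (A * y + B * x₂) := by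
    intro x₂; funext y; exact hdef y x₂
  have hy : ∀ x₁ : ℝ, (fun y => h x₁ y) = fun y => Real.exp (B * y + A * x₁) := by
    intro x₁; funext y; rw [hdef x₁ y, add_comm]
  constructor
  · intro x₁ x₂ _
    rw [hx x₂, hy x₁, deriv2_exp_affine, deriv2_exp_affine,
      deriv_exp_affine, deriv_exp_affine]
    simp only []
    have hcomm : Real.exp (B * x₂ + A * x₁) = Real.exp (A * x₁ + B * x₂) := by
      rw [add_comm]
    rw [hcomm]
    set E := Real.exp (A * x₁ + B * x₂)
    linear_combination (E / 2) * hL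
  · intro x₁
    rw [hx 0, hy x₁, deriv_exp_affine, deriv_exp_affine]
    simp only []
    have hcomm : Real.exp (B * 0 + A * x₁) = Real.exp (A * x₁ + B * 0) := by
      rw [add_comm]
    rw [hcomm]
    set E := Real.exp (A * x₁ + B * 0)
    linear_combination E * hR
end

section
/- Let μ₂ < 0, μ₁, r ∈ ℝ, α ∈ (0,π), and let θ^α = (θ₁^α, Θ₂⁺(θ₁^α)), θ̃^α = (θ₁^α, Θ₂⁻(θ₁^α)) with θ₁^α = −μ₁ + cos α √(μ₁²+μ₂²), Θ₂^±(θ₁) = −μ₂ ± √((μ₁²+μ₂²)−(θ₁+μ₁)²). Define on the closed upper half-plane h_α(x) = ((R·θ^α) e^{θ̃^α·x} − (R·θ̃^α) e^{θ^α·x}) / (θ₂^α − θ̃₂^α), where R = (r,1). Then h_α satisfies (1/2)Δh_α + μ·∇h_α = 0 on the open upper half-plane and R·∇h_α = 0 on {x₂ = 0}. -/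
lemma deriv_comb (A B D a b c d : ℝ) :
    deriv (fun y => (A * Real.exp (a * y + b) - B * Real.exp (c * y + d)) / D) =
    fun y => (A * a * Real.exp (a * y + b) - B * c * Real.exp (c * y + d)) / D := by
  funext y
  have h1 : HasDerivAt (fun y : ℝ => a * y + b) a y := by
    simpa using ((hasDerivAt_id y).const_mul a).add_const b
  have h2 : HasDerivAt (fun y : ℝ => c * y + d) c y := by
    simpa using ((hasDerivAt_id y).const_mul c).add_const d
  have H : HasDerivAt (fun y => (A * Real.exp (a * y + b) - B * Real.exp (c * y + d)) / D)
      ((A * (Real.exp (a * y + b) * a) - B * (Real.exp (c * y + d) * c)) / D) y :=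
    ((h1.exp.const_mul A).sub (h2.exp.const_mul B)).div_const D
  rw [H.deriv]; ring

/-- The Martin-boundary harmonic function in direction `α`:
`h_α(x) = ((R·θ^α)e^{θ̃^α·x} − (R·θ̃^α)e^{θ^α·x})/(θ₂^α − θ̃₂^α)` satisfies
`(1/2)Δh_α + μ·∇h_α = 0` on the open upper half-plane and `R·∇h_α = 0` on the
boundary `{x₂ = 0}`, with `R = (r,1)`. -/
theorem stmt_19 (μ₁ μ₂ r : ℝ) (hμ₂ : μ₂ < 0) (α : ℝ) (hα : α ∈ Set.Ioo 0 Real.pi)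
    (t₁ p₂ m₂ : ℝ)
    (ht₁ : t₁ = -μ₁ + Real.cos α * Real.sqrt (μ₁ ^ 2 + μ₂ ^ 2))
    (hp₂ : p₂ = -μ₂ + Real.sqrt ((μ₁ ^ 2 + μ₂ ^ 2) - (t₁ + μ₁) ^ 2))
    (hm₂ : m₂ = -μ₂ - Real.sqrt ((μ₁ ^ 2 + μ₂ ^ 2) - (t₁ + μ₁) ^ 2))
    (h : ℝ → ℝ → ℝ)
    (hdef : ∀ x₁ x₂ : ℝ, h x₁ x₂ =
      ((r * t₁ + p₂) * Real.exp (t₁ * x₁ + m₂ * x₂)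
        - (r * t₁ + m₂) * Real.exp (t₁ * x₁ + p₂ * x₂)) / (p₂ - m₂)) :
    (∀ x₁ x₂ : ℝ, 0 < x₂ →
      (1 / 2) * (deriv (deriv (fun y => h y x₂)) x₁ + deriv (deriv (fun y => h x₁ y)) x₂)
        + μ₁ * deriv (fun y => h y x₂) x₁ + μ₂ * deriv (fun y => h x₁ y) x₂ = 0) ∧
    (∀ x₁ : ℝ, r * deriv (fun y => h y 0) x₁ + deriv (fun y => h x₁ y) 0 = 0) := by
  -- the square of the square root
  have hnn : (0:ℝ) ≤ (μ₁ ^ 2 + μ₂ ^ 2) - (t₁ + μ₁) ^ 2 := by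
    have hsq : Real.sqrt (μ₁ ^ 2 + μ₂ ^ 2) ^ 2 = μ₁ ^ 2 + μ₂ ^ 2 :=
      Real.sq_sqrt (by positivity)
    have hc : Real.cos α ^ 2 ≤ 1 := Real.cos_sq_le_one α
    have ht : (t₁ + μ₁) ^ 2 = Real.cos α ^ 2 * (μ₁ ^ 2 + μ₂ ^ 2) := by
      rw [ht₁]; ring_nf; nlinarith [hsq]
    nlinarith [sq_nonneg μ₁, sq_nonneg μ₂]
  have s2 : Real.sqrt ((μ₁ ^ 2 + μ₂ ^ 2) - (t₁ + μ₁) ^ 2) ^ 2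
      = (μ₁ ^ 2 + μ₂ ^ 2) - (t₁ + μ₁) ^ 2 := Real.sq_sqrt hnn
  have Kp : (1/2) * (t₁ ^ 2 + p₂ ^ 2) + μ₁ * t₁ + μ₂ * p₂ = 0 := by
    rw [hp₂]; linear_combination (1/2) * s2
  have Km : (1/2) * (t₁ ^ 2 + m₂ ^ 2) + μ₁ * t₁ + μ₂ * m₂ = 0 := by
    rw [hm₂]; linear_combination (1/2) * s2
  constructor
  · intro x₁ x₂ _
    have H1 : (fun y => h y x₂) = fun y =>
        ((r * t₁ + p₂) * Real.exp (t₁ * y + m₂ * x₂)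
          - (r * t₁ + m₂) * Real.exp (t₁ * y + p₂ * x₂)) / (p₂ - m₂) :=
      funext fun y => hdef y x₂
    have H2 : (fun y => h x₁ y) = fun y =>
        ((r * t₁ + p₂) * Real.exp (m₂ * y + t₁ * x₁)
          - (r * t₁ + m₂) * Real.exp (p₂ * y + t₁ * x₁)) / (p₂ - m₂) := by
      funext y
      rw [hdef, add_comm (t₁ * x₁) (m₂ * y), add_comm (t₁ * x₁) (p₂ * y)]
    rw [H1, H2, deriv_comb, deriv_comb, deriv_comb, deriv_comb]
    simp only []
    have e1 : Real.exp (m₂ * x₂ + t₁ * x₁) = Real.exp (t₁ * x₁ + m₂ * x₂) := by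
      rw [add_comm]
    have e2 : Real.exp (p₂ * x₂ + t₁ * x₁) = Real.exp (t₁ * x₁ + p₂ * x₂) := by
      rw [add_comm]
    rw [e1, e2]
    linear_combination
      ((r * t₁ + p₂) * Real.exp (t₁ * x₁ + m₂ * x₂) / (p₂ - m₂)) * Km
      - ((r * t₁ + m₂) * Real.exp (t₁ * x₁ + p₂ * x₂) / (p₂ - m₂)) * Kp
  · intro x₁
    have H1 : (fun y => h y 0) = fun y =>
        ((r * t₁ + p₂) * Real.exp (t₁ * y + m₂ * 0)
          - (r * t₁ + m₂) * Real.exp (t₁ * y + p₂ * 0)) / (p₂ - m₂) :=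
      funext fun y => hdef y 0
    have H2 : (fun y => h x₁ y) = fun y =>
        ((r * t₁ + p₂) * Real.exp (m₂ * y + t₁ * x₁)
          - (r * t₁ + m₂) * Real.exp (p₂ * y + t₁ * x₁)) / (p₂ - m₂) := by
      funext y
      rw [hdef, add_comm (t₁ * x₁) (m₂ * y), add_comm (t₁ * x₁) (p₂ * y)]
    rw [H1, H2, deriv_comb, deriv_comb]
    simp only [mul_zero, add_zero, zero_add]
    ring
end
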